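/- arXiv:2307.01347 — 2 statements merged into one kernel-verified Lean document; each statement's English description precedes it below -/
import Mathlib

section
/- Let c > 0 and let g⁺ ∈ B_b(X̄₊) be given by g⁺(t,j) := e^{−ct}. Set C_{K,c} := ∫₀¹ (1 − (1 − x)^{K/c})² dx, so that C_{K,c} < 1. Then for every integer n ≥ 1, every ℓ⁺, ℓ⁻ ≥ 0, and every (s,i) ∈ ℝ₊ × E₊, ((J⁻ 𝒫⁻_{ℓ⁻+ℓ⁺} J⁺ 𝒫⁺_{ℓ⁻+ℓ⁺})ⁿ g⁺)(s,i) ≤ C_{K,c}ⁿ · e^{−cs}. -/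
open MeasureTheory Set Filter
open scoped ENNReal

noncomputable section

/-- The extended state space `Ē = E ∪ {∂}`, with `none` playing the role of the coffin state. -/
instance optionMeasurableSpace {E : Type*} : MeasurableSpace (Option E) := ⊤

/-- The canonical path space: `Ē`-valued functions of time. -/
abbrev CPath (E : Type*) := ℝ → Option E

/-- The state of the path at an extended time, with `X_∞ := ∂`. -/
def Xat {E : Type*} (t : ℝ≥0∞) (ω : CPath E) : Option E :=
  if t = ∞ then none else ω t.toReal

/-- The additive functional `φ_t(s) = ∫_s^t v(X_u) du`. -/
def phi {E : Type*} (v : Option E → ℝ) (s t : ℝ) (ω : CPath E) : ℝ :=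
  ∫ u in s..t, v (ω u)

/-- The first passage time `τ_ℓ⁺(s) = inf {t ∈ [s,∞] : φ_t(s) > ℓ}` (with `inf ∅ = ∞`). -/
def tauP {E : Type*} (v : Option E → ℝ) (s ℓ : ℝ) (ω : CPath E) : ℝ≥0∞ :=
  sInf {t : ℝ≥0∞ | ∃ u : ℝ, s ≤ u ∧ t = ENNReal.ofReal u ∧ ℓ < phi v s u ω}

/-- The first passage time `τ_ℓ⁻(s) = inf {t ∈ [s,∞] : φ_t(s) < -ℓ}` (with `inf ∅ = ∞`). -/
def tauM {E : Type*} (v : Option E → ℝ) (s ℓ : ℝ) (ω : CPath E) : ℝ≥0∞ :=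
  sInf {t : ℝ≥0∞ | ∃ u : ℝ, s ≤ u ∧ t = ENNReal.ofReal u ∧ phi v s u ω < -ℓ}

/-- `ξ⁺_{ℓ⁻,ℓ⁺}(s)`: equals `τ_{ℓ⁺}⁺(s)` if it is strictly smaller than `τ_{ℓ⁻}⁻(s)`, else `∞`. -/
def xiP {E : Type*} (v : Option E → ℝ) (ℓm ℓp s : ℝ) (ω : CPath E) : ℝ≥0∞ :=
  if tauP v s ℓp ω < tauM v s ℓm ω then tauP v s ℓp ω else ∞

/-- `ξ⁻_{ℓ⁻,ℓ⁺}(s)`: equals `τ_{ℓ⁻}⁻(s)` if it is strictly smaller than `τ_{ℓ⁺}⁺(s)`, else `∞`. -/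
def xiM {E : Type*} (v : Option E → ℝ) (ℓm ℓp s : ℝ) (ω : CPath E) : ℝ≥0∞ :=
  if tauM v s ℓm ω < tauP v s ℓp ω then tauM v s ℓm ω else ∞

/-- Membership in `B_b(X̄₊)`: bounded measurable functions on
`X̄₊ = (ℝ₊ × E₊) ∪ {(∞,∂)}` vanishing at `(∞,∂)`, encoded as functions on
`[0,∞] × Ē` vanishing off `ℝ₊ × E₊` (in particular at `(∞,∂)`). -/
def MemBbP {E : Type*} (v : Option E → ℝ) (g : ℝ≥0∞ → Option E → ℝ) : Prop :=
  (∀ j, Measurable fun t => g t j) ∧ (∃ C, ∀ t j, |g t j| ≤ C) ∧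
    (∀ t, g t none = 0) ∧
    (∀ (t : ℝ≥0∞) (e : E), ¬(0 < v (some e) ∧ t ≠ ∞) → g t (some e) = 0)

/-- Membership in `B_b(X̄₋)`. -/
def MemBbM {E : Type*} (v : Option E → ℝ) (g : ℝ≥0∞ → Option E → ℝ) : Prop :=
  (∀ j, Measurable fun t => g t j) ∧ (∃ C, ∀ t j, |g t j| ≤ C) ∧
    (∀ t, g t none = 0) ∧
    (∀ (t : ℝ≥0∞) (e : E), ¬(v (some e) < 0 ∧ t ≠ ∞) → g t (some e) = 0)

/-- `g` decays exponentially fast to zero: `|g(s,i)| ≤ C e^{-c s}` for some `C, c > 0`. -/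
def DecaysExp {E : Type*} (g : ℝ≥0∞ → Option E → ℝ) : Prop :=
  ∃ C c : ℝ, 0 < C ∧ 0 < c ∧
    ∀ (t : ℝ≥0∞) (j : Option E), t ≠ ∞ → |g t j| ≤ C * Real.exp (-c * t.toReal)

/-- Generic expectation operator `(s,i) ↦ 𝔼_{s,i}[g(σ(s), X_{σ(s)})]` associated with a family of
random times `σ(s)`, as an operator on functions of `(t,j) ∈ [0,∞] × Ē` (value `0` at `t = ∞`). -/
def applyAt {E : Type*} (P : ℝ → Option E → Measure (CPath E)) (σ : ℝ → CPath E → ℝ≥0∞)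
    (g : ℝ≥0∞ → Option E → ℝ) : ℝ≥0∞ → Option E → ℝ :=
  fun t j =>
    if t = ∞ then 0
    else ∫ ω, g (σ t.toReal ω) (Xat (σ t.toReal ω) ω) ∂ P t.toReal j

/-- Restriction of a function on `[0,∞] × Ē` to `X̄₊` (zero off `ℝ₊ × E₊`). -/
def restrP {E : Type*} (v : Option E → ℝ) (g : ℝ≥0∞ → Option E → ℝ) :
    ℝ≥0∞ → Option E → ℝ :=
  fun t j =>
    match j with
    | none => 0
    | some e => if 0 < v (some e) ∧ t ≠ ∞ then g t (some e) else 0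

/-- Restriction of a function on `[0,∞] × Ē` to `X̄₋` (zero off `ℝ₊ × E₋`). -/
def restrM {E : Type*} (v : Option E → ℝ) (g : ℝ≥0∞ → Option E → ℝ) :
    ℝ≥0∞ → Option E → ℝ :=
  fun t j =>
    match j with
    | none => 0
    | some e => if v (some e) < 0 ∧ t ≠ ∞ then g t (some e) else 0

/-- The operator `𝒫_ℓ⁺ : B_b(X̄₊) → B_b(X̄₊)`, `(𝒫_ℓ⁺ g)(s,i) = 𝔼_{s,i}[g(τ_ℓ⁺(s), X_{τ_ℓ⁺(s)})]`. -/
def opP {E : Type*} (P : ℝ → Option E → Measure (CPath E)) (v : Option E → ℝ) (ℓ : ℝ)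
    (g : ℝ≥0∞ → Option E → ℝ) : ℝ≥0∞ → Option E → ℝ :=
  restrP v (applyAt P (fun s => tauP v s ℓ) g)

/-- The operator `J⁺ : B_b(X̄₊) → B_b(X̄₋)`, `(J⁺ g)(s,i) = 𝔼_{s,i}[g(τ₀⁺(s), X_{τ₀⁺(s)})]`. -/
def opJP {E : Type*} (P : ℝ → Option E → Measure (CPath E)) (v : Option E → ℝ)
    (g : ℝ≥0∞ → Option E → ℝ) : ℝ≥0∞ → Option E → ℝ :=
  restrM v (applyAt P (fun s => tauP v s 0) g)

/-- The operator `𝒫_ℓ⁻ : B_b(X̄₋) → B_b(X̄₋)`. -/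
def opM {E : Type*} (P : ℝ → Option E → Measure (CPath E)) (v : Option E → ℝ) (ℓ : ℝ)
    (g : ℝ≥0∞ → Option E → ℝ) : ℝ≥0∞ → Option E → ℝ :=
  restrM v (applyAt P (fun s => tauM v s ℓ) g)

/-- The operator `J⁻ : B_b(X̄₋) → B_b(X̄₊)`. -/
def opJM {E : Type*} (P : ℝ → Option E → Measure (CPath E)) (v : Option E → ℝ)
    (g : ℝ≥0∞ → Option E → ℝ) : ℝ≥0∞ → Option E → ℝ :=
  restrP v (applyAt P (fun s => tauM v s 0) g)

/-- The operator `Ξ⁺_{ℓ⁻,ℓ⁺}`, `(Ξ⁺ g)(s,i) = 𝔼_{s,i}[g(ξ⁺_{ℓ⁻,ℓ⁺}(s), X_{ξ⁺_{ℓ⁻,ℓ⁺}(s)})]`. -/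
def opXiP {E : Type*} (P : ℝ → Option E → Measure (CPath E)) (v : Option E → ℝ) (ℓm ℓp : ℝ)
    (g : ℝ≥0∞ → Option E → ℝ) (s : ℝ) (j : Option E) : ℝ :=
  ∫ ω, g (xiP v ℓm ℓp s ω) (Xat (xiP v ℓm ℓp s ω) ω) ∂ P s j

/-- The operator `Ξ⁻_{ℓ⁻,ℓ⁺}`. -/
def opXiM {E : Type*} (P : ℝ → Option E → Measure (CPath E)) (v : Option E → ℝ) (ℓm ℓp : ℝ)
    (g : ℝ≥0∞ → Option E → ℝ) (s : ℝ) (j : Option E) : ℝ :=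
  ∫ ω, g (xiM v ℓm ℓp s ω) (Xat (xiM v ℓm ℓp s ω) ω) ∂ P s j

/-- The raw σ-field `σ(X_u, u ∈ [s,r])` on path space. -/
def natF {E : Type*} (s r : ℝ) : MeasurableSpace (CPath E) :=
  ⨆ u ∈ Set.Icc s r, MeasurableSpace.comap (fun ω : CPath E => ω u) ⊤

/-- The right-continuous filtration `F^s_t = ⋂_{r > t} σ(X_u, u ∈ [s,r])`,
indexed by extended times, with `F^s_∞ = σ(X_u, u ≥ s)`. -/
def Fst {E : Type*} (s : ℝ) (t : ℝ≥0∞) : MeasurableSpace (CPath E) :=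
  if t = ∞ then ⨆ u ∈ Set.Ici s, MeasurableSpace.comap (fun ω : CPath E => ω u) ⊤
  else ⨅ r ∈ Set.Ioi t.toReal, natF s r

/-- `τ` is an `𝔽ₛ`-stopping time. -/
def IsST {E : Type*} (s : ℝ) (τ : CPath E → ℝ≥0∞) : Prop :=
  ∀ t : ℝ≥0∞, MeasurableSet[Fst s t] {ω | τ ω ≤ t}

/-- The σ-field `F^s_τ` at an `𝔽ₛ`-stopping time `τ`. -/
def stoppedSigma {E : Type*} (s : ℝ) (τ : CPath E → ℝ≥0∞) (hτ : IsST s τ) :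
    MeasurableSpace (CPath E) where
  MeasurableSet' A := ∀ t : ℝ≥0∞, MeasurableSet[Fst s t] (A ∩ {ω | τ ω ≤ t})
  measurableSet_empty := fun t => by
    simpa using (MeasurableSet.empty : MeasurableSet[Fst s t] (∅ : Set (CPath E)))
  measurableSet_compl := fun A hA t => by
    have h1 : Aᶜ ∩ {ω | τ ω ≤ t} = {ω | τ ω ≤ t} \ (A ∩ {ω | τ ω ≤ t}) := by
      ext ω
      simp only [Set.mem_inter_iff, Set.mem_compl_iff, Set.mem_diff, Set.mem_setOf_eq]
      tauto
    rw [h1]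
    exact MeasurableSet.diff (hτ t) (hA t)
  measurableSet_iUnion := fun f hf t => by
    rw [Set.iUnion_inter]
    exact MeasurableSet.iUnion fun n => hf n t

/-- A canonical time-inhomogeneous Markov family on `Ē`, with right-continuous sample paths,
absorbing coffin state, initial condition `ℙ_{s,i}(X_s = i) = 1` and the strong Markov property
with respect to the right-continuous filtrations `𝔽ₛ`. -/
structure MarkovFamily (E : Type*) (v : Option E → ℝ) where
  /-- The family of probability measures `ℙ_{s,i}` on canonical path space. -/
  P : ℝ → Option E → Measure (CPath E)
  prob : ∀ s j, IsProbabilityMeasure (P s j)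
  init : ∀ (s : ℝ) (j : Option E), 0 ≤ s → P s j {ω | ω s = j} = 1
  pathReg : ∀ (s : ℝ) (j : Option E), 0 ≤ s → ∀ᵐ ω ∂ P s j,
    (∀ t, s ≤ t → ∃ ε > 0, ∀ u ∈ Set.Ico t (t + ε), ω u = ω t) ∧
    (∀ t, s ≤ t → ω t = none → ∀ u, t ≤ u → ω u = none)
  strongMarkov : ∀ (s : ℝ) (j : Option E), 0 ≤ s →
    ∀ (τ : CPath E → ℝ≥0∞) (hτ : IsST s τ), (∀ ω, ENNReal.ofReal s ≤ τ ω) →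
    ∀ G : ℝ≥0∞ → CPath E → ℝ, Measurable (Function.uncurry G) →
      (∃ C, ∀ t ω, |G t ω| ≤ C) →
      (∀ (t : ℝ) (ω ω' : CPath E), (∀ u, t ≤ u → ω u = ω' u) →
        G (ENNReal.ofReal t) ω = G (ENNReal.ofReal t) ω') →
      (P s j)[fun ω => Set.indicator {ω' : CPath E | τ ω' ≠ ∞}
          (fun ω' => G (τ ω') ω') ω | stoppedSigma s τ hτ]
        =ᵐ[P s j]
      fun ω => Set.indicator {ω' : CPath E | τ ω' ≠ ∞}
          (fun ω' => ∫ ω'', G (τ ω') ω'' ∂ P (τ ω').toReal (ω' (τ ω').toReal)) ω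

/-- The first jump time `γ(s) = inf {t ≥ s : X_t ≠ X_s}`. -/
def gammaJump {E : Type*} (s : ℝ) (ω : CPath E) : ℝ≥0∞ :=
  sInf {t : ℝ≥0∞ | ∃ u : ℝ, s ≤ u ∧ t = ENNReal.ofReal u ∧ ω u ≠ ω s}

/-- Assumption on the sub-Markovian generator matrices `(Λ_s)`: entries uniformly bounded by `K`,
nonnegative off-diagonal entries, nonpositive row sums, and the law of the first jump time is
`ℙ_{s,i}(γ(s) ≤ T) = 1 - exp(∫_s^T Λ_u(i,i) du)`. -/
structure GenAssumption (E : Type*) [Fintype E] (v : Option E → ℝ)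
    (M : MarkovFamily E v) (K : ℝ) where
  hK : 0 < K
  Lam : ℝ → E → E → ℝ
  bdd : ∀ s i j, |Lam s i j| ≤ K
  offDiag : ∀ s i j, i ≠ j → 0 ≤ Lam s i j
  rowSum : ∀ s i, ∑ j, Lam s i j ≤ 0
  jumpLaw : ∀ (s T : ℝ) (i : E), 0 ≤ s → s ≤ T →
    (M.P s (some i) {ω | gammaJump s ω ≤ ENNReal.ofReal T}).toReal
      = 1 - Real.exp (∫ u in s..T, Lam u i i)

end

/-- The composite operator `J⁻ 𝒫⁻_ℓ J⁺ 𝒫⁺_ℓ : B_b(X̄₊) → B_b(X̄₊)`. -/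
noncomputable def opAplus {E : Type*} (P : ℝ → Option E → Measure (CPath E)) (v : Option E → ℝ) (ℓ : ℝ) :
    (ℝ≥0∞ → Option E → ℝ) → (ℝ≥0∞ → Option E → ℝ) :=
  fun h => opJM P v (opM P v ℓ (opJP P v (opP P v ℓ h)))

/-- The composite operator `J⁺ 𝒫⁺_ℓ J⁻ 𝒫⁻_ℓ : B_b(X̄₋) → B_b(X̄₋)`. -/
noncomputable def opAminus {E : Type*} (P : ℝ → Option E → Measure (CPath E)) (v : Option E → ℝ) (ℓ : ℝ) :
    (ℝ≥0∞ → Option E → ℝ) → (ℝ≥0∞ → Option E → ℝ) :=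
  fun h => opJP P v (opP P v ℓ (opJM P v (opM P v ℓ h)))

/-- The element of `B_b(X̄₊)` given by `g⁺(t,j) = e^{-ct}`. -/
noncomputable def expFunP {E : Type*} (v : Option E → ℝ) (c : ℝ) :
    ℝ≥0∞ → Option E → ℝ :=
  fun t j =>
    match j with
    | none => 0
    | some e => if 0 < v (some e) ∧ t ≠ ∞ then Real.exp (-c * t.toReal) else 0


/-!
On a state `i` with `v(i) > 0` the functional `φ` can only drop below `0` after the first jump
`γ(s)`, and symmetrically on `E₋`; so `J⁻` and `J⁺` sample their argument no earlier than `γ(s)`.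
The hypothesis on `Λ` gives `ℙ_{s,i}(γ(s) ≤ s + u) ≤ 1 - e^{-Ku}`, whence
`𝔼_{s,i}[e^{-cγ(s)}] ≤ K/(K+c) · e^{-cs}`. The operators `𝒫^±_ℓ` do not increase a bound of the form
`B e^{-ct}`, since their stopping times are at least `t`. Hence each application of
`J⁻ 𝒫⁻ J⁺ 𝒫⁺` multiplies such a bound by `(K/(K+c))²`, and with `r = K/c`,
`(r/(r+1))² < C_{K,c} = 1 - 2/(r+1) + 1/(2r+1) < 1`.
-/

open Topology

lemma integral_one_sub_rpow {r : ℝ} (hr : -1 < r) :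
    ∫ x in (0 : ℝ)..1, (1 - x) ^ r = 1 / (r + 1) := by
  have h := intervalIntegral.integral_comp_sub_left (a := (0 : ℝ)) (b := 1) (fun y : ℝ => y ^ r) 1
  norm_num at h
  rw [h, integral_rpow (Or.inl hr), Real.one_rpow, Real.zero_rpow (by linarith)]
  ring

lemma integral_one_sub_one_sub_rpow_sq {r : ℝ} (hr : 0 < r) :
    ∫ x in (0 : ℝ)..1, (1 - (1 - x) ^ r) ^ 2 = 1 - 2 / (r + 1) + 1 / (2 * r + 1) := by
  have hintegrable : ∀ p : ℝ, 0 ≤ p → IntervalIntegrable (fun x : ℝ => (1 - x) ^ p) volume 0 1 :=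
    fun p hp => ((continuous_const.sub continuous_id).rpow_const
      fun _ => Or.inr hp).intervalIntegrable 0 1
  have hexpand : EqOn (fun x : ℝ => (1 - (1 - x) ^ r) ^ 2)
      (fun x => 1 - 2 * (1 - x) ^ r + (1 - x) ^ (2 * r)) (uIcc 0 1) := by
    intro x hx
    rw [uIcc_of_le zero_le_one] at hx
    simp only [two_mul r, Real.rpow_add' (sub_nonneg.2 hx.2) (by positivity : r + r ≠ 0)]
    ring
  rw [intervalIntegral.integral_congr hexpand,
    intervalIntegral.integral_add (intervalIntegrable_const.sub ((hintegrable r hr.le).const_mul 2))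
      (hintegrable _ (by positivity)),
    intervalIntegral.integral_sub intervalIntegrable_const ((hintegrable r hr.le).const_mul 2),
    intervalIntegral.integral_const_mul, integral_one_sub_rpow (by linarith),
    integral_one_sub_rpow (by linarith)]
  norm_num
  ring

lemma one_sub_two_div_add_one_div_lt_one {r : ℝ} (hr : 0 < r) :
    1 - 2 / (r + 1) + 1 / (2 * r + 1) < 1 := by
  have key : 1 - (1 - 2 / (r + 1) + 1 / (2 * r + 1)) = (3 * r + 1) / ((r + 1) * (2 * r + 1)) := by
    field_simp
    ring
  have : 0 < (3 * r + 1) / ((r + 1) * (2 * r + 1)) := by positivity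
  linarith

lemma sq_div_add_one_lt_one_sub_two_div_add_one_div {r : ℝ} (hr : 0 < r) :
    (r / (r + 1)) ^ 2 < 1 - 2 / (r + 1) + 1 / (2 * r + 1) := by
  have key : 1 - 2 / (r + 1) + 1 / (2 * r + 1) - (r / (r + 1)) ^ 2
      = r ^ 2 / ((r + 1) ^ 2 * (2 * r + 1)) := by
    field_simp
    ring
  have : 0 < r ^ 2 / ((r + 1) ^ 2 * (2 * r + 1)) := by positivity
  linarith

noncomputable def expWeight (c : ℝ) (t : ℝ≥0∞) : ℝ :=
  if t = ∞ then 0 else Real.exp (-c * t.toReal)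

lemma expWeight_nonneg (c : ℝ) (t : ℝ≥0∞) : 0 ≤ expWeight c t := by
  unfold expWeight
  split_ifs
  exacts [le_rfl, (Real.exp_pos _).le]

lemma expWeight_ofReal (c : ℝ) {s : ℝ} (hs : 0 ≤ s) :
    expWeight c (ENNReal.ofReal s) = Real.exp (-c * s) := by
  simp [expWeight, ENNReal.toReal_ofReal hs]

lemma expWeight_antitone {c : ℝ} (hc : 0 ≤ c) : Antitone (expWeight c) := by
  intro a b hab
  by_cases hb : b = ∞
  · simpa [expWeight, hb] using expWeight_nonneg c a
  have ha : a ≠ ∞ := ne_top_of_le_ne_top hb hab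
  simp only [expWeight, if_neg ha, if_neg hb, Real.exp_le_exp]
  nlinarith [ENNReal.toReal_mono hb hab]

lemma ofReal_exp_neg_mul_min_le {c δ x : ℝ} (hc : 0 ≤ c) (hδ : 0 ≤ δ) (hx : 0 ≤ x)
    (f : ℕ → ℝ≥0∞) (hf : ∀ k : ℕ, x ≤ (k + 1) * δ → 1 ≤ f k) (N : ℕ) :
    ENNReal.ofReal (Real.exp (-(c * min x (N * δ))))
      ≤ ENNReal.ofReal (Real.exp (-(c * (N * δ)))) + ∑ k ∈ Finset.range N,
        ENNReal.ofReal (Real.exp (-(c * (k * δ))) - Real.exp (-(c * ((k + 1) * δ)))) * f k := by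
  induction N with
  | zero => simp [min_eq_right hx]
  | succ N ih =>
    push_cast
    rw [Finset.sum_range_succ]
    by_cases hxN : x ≤ (N + 1) * δ
    · have hmin : min x (N * δ) ≤ min x ((N + 1) * δ) := min_le_min_left x (by nlinarith)
      have hsplit : ENNReal.ofReal (Real.exp (-(c * (N * δ))))
          = ENNReal.ofReal (Real.exp (-(c * ((N + 1) * δ))))
            + ENNReal.ofReal (Real.exp (-(c * (N * δ))) - Real.exp (-(c * ((N + 1) * δ)))) := by
        rw [← ENNReal.ofReal_add (Real.exp_pos _).le
          (sub_nonneg.2 (Real.exp_le_exp.2 (by nlinarith)))]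
        ring_nf
      calc ENNReal.ofReal (Real.exp (-(c * min x ((N + 1) * δ))))
          ≤ ENNReal.ofReal (Real.exp (-(c * min x (N * δ)))) :=
            ENNReal.ofReal_le_ofReal (Real.exp_le_exp.2 (by nlinarith))
        _ ≤ _ := ih
        _ ≤ _ := by
          rw [hsplit, add_assoc, add_comm (ENNReal.ofReal _) (∑ k ∈ _, _)]
          gcongr
          exact le_mul_of_one_le_right (by positivity) (hf N hxN)
    · rw [min_eq_right (not_le.1 hxN).le]
      exact le_self_add

/-- Bound on `𝔼[e^{-c(τ - s)}]` obtained by rounding `τ - s` down to the grid `δℕ`, capped at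
`Nδ`, when `ℙ(τ ≤ s + u) ≤ 1 - e^{-Ku}`. -/
noncomputable def discreteExpBound (K c δ : ℝ) (N : ℕ) : ℝ :=
  Real.exp (-(c * (N * δ))) + ∑ k ∈ Finset.range N,
    (Real.exp (-(c * (k * δ))) - Real.exp (-(c * ((k + 1) * δ))))
      * (1 - Real.exp (-(K * ((k + 1) * δ))))

/-- The random time `τ` need not be measurable: the bound goes through the measurable hulls of
the sets `{τ ≤ s + (k + 1) δ}`. -/
lemma lintegral_expWeight_le_discreteExpBound {Ω : Type*} [MeasurableSpace Ω] (μ : Measure Ω)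
    [IsProbabilityMeasure μ] (τ : Ω → ℝ≥0∞) {s c K δ : ℝ} (hc : 0 ≤ c) (hK : 0 ≤ K)
    (hδ : 0 ≤ δ) (hτ : ∀ ω, ENNReal.ofReal s ≤ τ ω)
    (hlaw : ∀ u, 0 ≤ u →
      μ {ω | τ ω ≤ ENNReal.ofReal (s + u)} ≤ ENNReal.ofReal (1 - Real.exp (-(K * u))))
    (N : ℕ) :
    ∫⁻ ω, ENNReal.ofReal (expWeight c (τ ω)) ∂μ
      ≤ ENNReal.ofReal (Real.exp (-c * s) * discreteExpBound K c δ N) := by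
  set T : ℕ → Set Ω := fun k => toMeasurable μ {ω | τ ω ≤ ENNReal.ofReal (s + (k + 1) * δ)}
  set a : ℕ → ℝ := fun k => Real.exp (-(c * (k * δ))) - Real.exp (-(c * ((k + 1) * δ)))
  set b : ℕ → ℝ := fun k => 1 - Real.exp (-(K * ((k + 1) * δ)))
  have ha : ∀ k, 0 ≤ a k := fun k => sub_nonneg.2 (Real.exp_le_exp.2 (by nlinarith))
  have hb : ∀ k, 0 ≤ b k := fun k => sub_nonneg.2 (Real.exp_le_one_iff.2 (by
    have : 0 ≤ K * ((k + 1) * δ) := by positivity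
    linarith))
  set G : Ω → ℝ≥0∞ := fun ω => ENNReal.ofReal (Real.exp (-(c * (N * δ))))
    + ∑ k ∈ Finset.range N, ENNReal.ofReal (a k) * (T k).indicator (1 : Ω → ℝ≥0∞) ω
  have hpoint : ∀ ω,
      ENNReal.ofReal (expWeight c (τ ω)) ≤ ENNReal.ofReal (Real.exp (-c * s)) * G ω := by
    intro ω
    by_cases hτω : τ ω = ∞
    · simp [expWeight, hτω]
    set x := (τ ω).toReal - s
    have hx : 0 ≤ x := sub_nonneg.2 ((ENNReal.ofReal_le_iff_le_toReal hτω).1 (hτ ω))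
    have hT : ∀ k : ℕ, x ≤ (k + 1) * δ → 1 ≤ (T k).indicator (1 : Ω → ℝ≥0∞) ω := fun k hk => by
      rw [indicator_of_mem (subset_toMeasurable _ _ ?_)]
      · rfl
      · show τ ω ≤ _
        rw [← ENNReal.ofReal_toReal hτω]
        exact ENNReal.ofReal_le_ofReal (by linarith)
    calc ENNReal.ofReal (expWeight c (τ ω))
        ≤ ENNReal.ofReal (Real.exp (-c * s) * Real.exp (-(c * min x (N * δ)))) := by
          rw [expWeight, if_neg hτω, ← Real.exp_add]
          exact ENNReal.ofReal_le_ofReal (Real.exp_le_exp.2 (by nlinarith [min_le_left x (N * δ)]))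
      _ ≤ _ := by
        rw [ENNReal.ofReal_mul (Real.exp_pos _).le]
        gcongr
        exact ofReal_exp_neg_mul_min_le hc hδ hx _ hT N
  have hμT : ∀ k, μ (T k) ≤ ENNReal.ofReal (b k) := fun k => by
    rw [measure_toMeasurable]
    exact hlaw _ (by positivity)
  have hG : ∫⁻ ω, G ω ∂μ ≤ ENNReal.ofReal (discreteExpBound K c δ N) := by
    calc ∫⁻ ω, G ω ∂μ
        = ENNReal.ofReal (Real.exp (-(c * (N * δ))))
          + ∑ k ∈ Finset.range N, ENNReal.ofReal (a k) * μ (T k) := by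
          rw [lintegral_add_left measurable_const, lintegral_const, measure_univ, mul_one,
            lintegral_finsetSum _ fun k _ =>
              (measurable_one.indicator (measurableSet_toMeasurable _ _)).const_mul _]
          congr 1
          refine Finset.sum_congr rfl fun k _ => ?_
          rw [lintegral_const_mul' _ _ ENNReal.ofReal_ne_top,
            lintegral_indicator_one (measurableSet_toMeasurable _ _)]
      _ ≤ ENNReal.ofReal (Real.exp (-(c * (N * δ))))
          + ∑ k ∈ Finset.range N, ENNReal.ofReal (a k) * ENNReal.ofReal (b k) := by
          gcongr with k
          exact hμT k
      _ = ENNReal.ofReal (discreteExpBound K c δ N) := by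
          simp_rw [← ENNReal.ofReal_mul (ha _)]
          rw [← ENNReal.ofReal_sum_of_nonneg fun k _ => mul_nonneg (ha k) (hb k),
            ← ENNReal.ofReal_add (Real.exp_pos _).le
              (Finset.sum_nonneg fun k _ => mul_nonneg (ha k) (hb k))]
          rfl
  calc ∫⁻ ω, ENNReal.ofReal (expWeight c (τ ω)) ∂μ
      ≤ ∫⁻ ω, ENNReal.ofReal (Real.exp (-c * s)) * G ω ∂μ := lintegral_mono hpoint
    _ = ENNReal.ofReal (Real.exp (-c * s)) * ∫⁻ ω, G ω ∂μ :=
        lintegral_const_mul' _ _ ENNReal.ofReal_ne_top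
    _ ≤ ENNReal.ofReal (Real.exp (-c * s)) * ENNReal.ofReal (discreteExpBound K c δ N) := by
        gcongr
    _ = _ := (ENNReal.ofReal_mul (Real.exp_pos _).le).symm

lemma pow_add_sum_range_sub_mul_one_sub_pow {a b : ℝ} (hab : a * b ≠ 1) (N : ℕ) :
    a ^ N + ∑ k ∈ Finset.range N, (a ^ k - a ^ (k + 1)) * (1 - b ^ (k + 1))
      = 1 - b * (1 - (a * b) ^ N) * ((1 - a) / (1 - a * b)) := by
  have htel : ∑ k ∈ Finset.range N, (a ^ k - a ^ (k + 1)) = 1 - a ^ N := by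
    simpa using Finset.sum_range_sub' (fun k => a ^ k) N
  have hterm : ∀ k ∈ Finset.range N, (a ^ k - a ^ (k + 1)) * (1 - b ^ (k + 1))
      = (a ^ k - a ^ (k + 1)) - (1 - a) * b * (a * b) ^ k := fun k _ => by
    rw [mul_pow]
    ring
  rw [Finset.sum_congr rfl hterm, Finset.sum_sub_distrib, htel, ← Finset.mul_sum,
    geom_sum_eq hab]
  have : 1 - a * b ≠ 0 := sub_ne_zero.2 hab.symm
  have : a * b - 1 ≠ 0 := sub_ne_zero.2 hab
  field_simp
  ring

lemma discreteExpBound_eq {K c δ : ℝ} (hKc : (c + K) * δ ≠ 0) (N : ℕ) :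
    discreteExpBound K c δ N = 1 - Real.exp (-(K * δ))
      * (1 - Real.exp (-((c + K) * δ)) ^ N)
      * ((1 - Real.exp (-(c * δ))) / (1 - Real.exp (-((c + K) * δ)))) := by
  have hexp : ∀ (x : ℝ) (n : ℕ), Real.exp (-(x * (n * δ))) = Real.exp (-(x * δ)) ^ n :=
    fun x n => by
      rw [← Real.exp_nat_mul]
      ring_nf
  have hsplit : Real.exp (-((c + K) * δ)) = Real.exp (-(c * δ)) * Real.exp (-(K * δ)) := by
    rw [← Real.exp_add]
    ring_nf
  have hne : Real.exp (-(c * δ)) * Real.exp (-(K * δ)) ≠ 1 := by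
    rw [← hsplit, Ne, Real.exp_eq_one_iff, neg_eq_zero]
    exact hKc
  rw [hsplit, ← pow_add_sum_range_sub_mul_one_sub_pow hne, discreteExpBound, hexp]
  congr 1
  refine Finset.sum_congr rfl fun k _ => ?_
  have h := hexp c (k + 1)
  have h' := hexp K (k + 1)
  push_cast at h h'
  rw [hexp, h, h']

lemma tendsto_one_sub_exp_neg_mul_div (a : ℝ) {δ : ℕ → ℝ} (hδ : Tendsto δ atTop (𝓝[≠] 0)) :
    Tendsto (fun m => (1 - Real.exp (-(a * δ m))) / δ m) atTop (𝓝 a) := by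
  have hderiv : HasDerivAt (fun x : ℝ => 1 - Real.exp (-(a * x))) a 0 := by
    have := (((hasDerivAt_id (0 : ℝ)).const_mul a).neg.exp).const_sub 1
    simpa using this
  refine ((hasDerivAt_iff_tendsto_slope.1 hderiv).comp hδ).congr fun m => ?_
  simp [Function.comp, slope_def_field]

lemma tendsto_discreteExpBound {K c : ℝ} (hK : 0 ≤ K) (hc : 0 < c) :
    Tendsto (fun m : ℕ => discreteExpBound K c (1 / (m + 1)) ((m + 1) * (m + 1))) atTop
      (𝓝 (K / (K + c))) := by
  have hcK : 0 < c + K := by positivity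
  have hδ : Tendsto (fun m : ℕ => (1 : ℝ) / (m + 1)) atTop (𝓝[≠] 0) :=
    tendsto_nhdsWithin_of_tendsto_nhds_of_eventually_within _
      tendsto_one_div_add_atTop_nhds_zero_nat
      (Eventually.of_forall fun m => (by positivity : (0 : ℝ) < 1 / (m + 1)).ne')
  have hb : Tendsto (fun m : ℕ => Real.exp (-(K * (1 / (m + 1))))) atTop (𝓝 1) := by
    simpa using ((tendsto_nhds_of_tendsto_nhdsWithin hδ).const_mul K).neg.rexp
  have hpow : Tendsto (fun m : ℕ => Real.exp (-((c + K) * (1 / (m + 1)))) ^ ((m + 1) * (m + 1)))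
      atTop (𝓝 0) := by
    have heq : ∀ m : ℕ, Real.exp (-((c + K) * (1 / (m + 1)))) ^ ((m + 1) * (m + 1))
        = Real.exp (-((c + K) * (m + 1))) := fun m => by
      rw [← Real.exp_nat_mul]
      push_cast
      field_simp
    simp only [heq]
    refine Real.tendsto_exp_atBot.comp (tendsto_neg_atTop_atBot.comp
      (Tendsto.const_mul_atTop hcK ?_))
    exact tendsto_atTop_add_const_right _ 1 tendsto_natCast_atTop_atTop
  have hratio : Tendsto (fun m : ℕ => (1 - Real.exp (-(c * (1 / (m + 1)))))
      / (1 - Real.exp (-((c + K) * (1 / (m + 1)))))) atTop (𝓝 (c / (c + K))) := by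
    refine ((tendsto_one_sub_exp_neg_mul_div c hδ).div
      (tendsto_one_sub_exp_neg_mul_div (c + K) hδ) hcK.ne').congr fun m => ?_
    exact div_div_div_cancel_right₀ (by positivity) _ _
  have hval : K / (K + c) = 1 - 1 * (1 - 0) * (c / (c + K)) := by
    rw [add_comm K c]
    field_simp
    ring
  rw [hval]
  refine Tendsto.congr (fun m => (discreteExpBound_eq (by positivity) _).symm) ?_
  exact tendsto_const_nhds.sub ((hb.mul (tendsto_const_nhds.sub hpow)).mul hratio)

lemma lintegral_expWeight_le {Ω : Type*} [MeasurableSpace Ω] (μ : Measure Ω)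
    [IsProbabilityMeasure μ] (τ : Ω → ℝ≥0∞) {s c K : ℝ} (hc : 0 < c) (hK : 0 ≤ K)
    (hτ : ∀ ω, ENNReal.ofReal s ≤ τ ω)
    (hlaw : ∀ u, 0 ≤ u →
      μ {ω | τ ω ≤ ENNReal.ofReal (s + u)} ≤ ENNReal.ofReal (1 - Real.exp (-(K * u)))) :
    ∫⁻ ω, ENNReal.ofReal (expWeight c (τ ω)) ∂μ
      ≤ ENNReal.ofReal (K / (K + c) * Real.exp (-c * s)) := by
  rw [mul_comm]
  refine ge_of_tendsto'
    (ENNReal.tendsto_ofReal (tendsto_const_nhds.mul (tendsto_discreteExpBound hK hc))) fun m => ?_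
  exact lintegral_expWeight_le_discreteExpBound μ τ hc.le hK (by positivity) hτ hlaw _

lemma exists_mem_Ioc_neg_of_integral_neg {f : ℝ → ℝ} {a b : ℝ} (hab : a ≤ b)
    (h : ∫ x in a..b, f x < 0) : ∃ x ∈ Ioc a b, f x < 0 := by
  by_contra! hf
  have : 0 ≤ ∫ x in a..b, f x := by
    rw [intervalIntegral.integral_of_le hab]
    exact integral_nonneg_of_ae
      (by filter_upwards [ae_restrict_mem measurableSet_Ioc] with x hx using hf x hx)
  linarith

lemma exists_mem_Ioc_pos_of_integral_pos {f : ℝ → ℝ} {a b : ℝ} (hab : a ≤ b)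
    (h : 0 < ∫ x in a..b, f x) : ∃ x ∈ Ioc a b, 0 < f x := by
  obtain ⟨x, hx, hfx⟩ := exists_mem_Ioc_neg_of_integral_neg (f := fun x => -f x) hab
    (by rw [intervalIntegral.integral_neg]; linarith)
  exact ⟨x, hx, neg_neg_iff_pos.1 hfx⟩

section

variable {E : Type*}

lemma ofReal_le_sInf_ofReal {s : ℝ} (p : ℝ → Prop) :
    ENNReal.ofReal s ≤ sInf {t : ℝ≥0∞ | ∃ u : ℝ, s ≤ u ∧ t = ENNReal.ofReal u ∧ p u} := by
  refine le_sInf ?_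
  rintro _ ⟨u, hu, rfl, -⟩
  exact ENNReal.ofReal_le_ofReal hu

lemma gammaJump_le_sInf {s : ℝ} {ω : CPath E} {p : ℝ → Prop}
    (h : ∀ u, s ≤ u → p u → ∃ u' ∈ Ioc s u, ω u' ≠ ω s) :
    gammaJump s ω ≤ sInf {t : ℝ≥0∞ | ∃ u : ℝ, s ≤ u ∧ t = ENNReal.ofReal u ∧ p u} := by
  refine le_sInf ?_
  rintro _ ⟨u, hsu, rfl, hu⟩
  obtain ⟨u', hu', hjump⟩ := h u hsu hu
  have hmem : ENNReal.ofReal u' ∈ {t : ℝ≥0∞ | ∃ u : ℝ, s ≤ u ∧ t = ENNReal.ofReal u ∧ ω u ≠ ω s} :=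
    ⟨u', hu'.1.le, rfl, hjump⟩
  exact (sInf_le hmem).trans (ENNReal.ofReal_le_ofReal hu'.2)

lemma gammaJump_le_tauM {v : Option E → ℝ} {s ℓ : ℝ} {e : E} (he : 0 < v (some e))
    (hℓ : 0 ≤ ℓ) {ω : CPath E} (hω : ω s = some e) : gammaJump s ω ≤ tauM v s ℓ ω :=
  gammaJump_le_sInf fun u hsu hu => by
    obtain ⟨u', hu', hneg⟩ := exists_mem_Ioc_neg_of_integral_neg hsu
      (show phi v s u ω < 0 by linarith)
    exact ⟨u', hu', fun h => by rw [h, hω] at hneg; linarith⟩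

lemma gammaJump_le_tauP {v : Option E → ℝ} {s ℓ : ℝ} {e : E} (he : v (some e) < 0)
    (hℓ : 0 ≤ ℓ) {ω : CPath E} (hω : ω s = some e) : gammaJump s ω ≤ tauP v s ℓ ω :=
  gammaJump_le_sInf fun u hsu hu => by
    obtain ⟨u', hu', hpos⟩ := exists_mem_Ioc_pos_of_integral_pos hsu
      (show 0 < phi v s u ω by linarith)
    exact ⟨u', hu', fun h => by rw [h, hω] at hpos; linarith⟩

lemma measure_gammaJump_le [Fintype E] {v : Option E → ℝ} {M : MarkovFamily E v} {K : ℝ}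
    (GA : GenAssumption E v M K) {s : ℝ} (hs : 0 ≤ s) (i : E) {u : ℝ} (hu : 0 ≤ u) :
    M.P s (some i) {ω | gammaJump s ω ≤ ENNReal.ofReal (s + u)}
      ≤ ENNReal.ofReal (1 - Real.exp (-(K * u))) := by
  have := M.prob s (some i)
  have hΛ : -(K * u) ≤ ∫ x in s..s + u, GA.Lam x i i := by
    by_cases hintegrable : IntervalIntegrable (fun x => GA.Lam x i i) volume s (s + u)
    · have h := intervalIntegral.integral_mono_on (by linarith) intervalIntegrable_const hintegrable
        fun x _ => neg_le_of_abs_le (GA.bdd x i i)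
      rw [intervalIntegral.integral_const, smul_eq_mul] at h
      linarith
    · rw [intervalIntegral.integral_undef hintegrable]
      nlinarith [GA.hK]
  rw [← ENNReal.ofReal_toReal (measure_ne_top _ _), GA.jumpLaw s (s + u) i hs (by linarith)]
  exact ENNReal.ofReal_le_ofReal (by linarith [Real.exp_le_exp.2 hΛ])

lemma lintegral_expWeight_gammaJump_le [Fintype E] {v : Option E → ℝ} {M : MarkovFamily E v}
    {K c : ℝ} (GA : GenAssumption E v M K) (hc : 0 < c) {s : ℝ} (hs : 0 ≤ s) (i : E) :
    ∫⁻ ω, ENNReal.ofReal (expWeight c (gammaJump s ω)) ∂M.P s (some i)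
      ≤ ENNReal.ofReal (K / (K + c) * Real.exp (-c * s)) :=
  haveI := M.prob s (some i)
  lintegral_expWeight_le _ _ hc GA.hK.le (fun _ => ofReal_le_sInf_ofReal _)
    fun _ hu => measure_gammaJump_le GA hs i hu

def ExpBounded (c B : ℝ) (h : ℝ≥0∞ → Option E → ℝ) : Prop :=
  ∀ t j, |h t j| ≤ B * expWeight c t

lemma ExpBounded.mono {c B B' : ℝ} {h : ℝ≥0∞ → Option E → ℝ} (hh : ExpBounded c B h)
    (hBB' : B ≤ B') : ExpBounded c B' h :=
  fun t j => (hh t j).trans (mul_le_mul_of_nonneg_right hBB' (expWeight_nonneg c t))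

lemma expBounded_restrP {v : Option E → ℝ} {c B : ℝ} (hB : 0 ≤ B) {h : ℝ≥0∞ → Option E → ℝ}
    (hh : ∀ t e, 0 < v (some e) → t ≠ ∞ → |h t (some e)| ≤ B * expWeight c t) :
    ExpBounded c B (restrP v h) := by
  rintro t (_ | e)
  · simpa [restrP] using mul_nonneg hB (expWeight_nonneg c t)
  · simp only [restrP]
    split_ifs with hte
    · exact hh t e hte.1 hte.2
    · simpa using mul_nonneg hB (expWeight_nonneg c t)

lemma expBounded_restrM {v : Option E → ℝ} {c B : ℝ} (hB : 0 ≤ B) {h : ℝ≥0∞ → Option E → ℝ}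
    (hh : ∀ t e, v (some e) < 0 → t ≠ ∞ → |h t (some e)| ≤ B * expWeight c t) :
    ExpBounded c B (restrM v h) := by
  rintro t (_ | e)
  · simpa [restrM] using mul_nonneg hB (expWeight_nonneg c t)
  · simp only [restrM]
    split_ifs with hte
    · exact hh t e hte.1 hte.2
    · simpa using mul_nonneg hB (expWeight_nonneg c t)

lemma expBounded_expFunP (v : Option E → ℝ) (c : ℝ) : ExpBounded c 1 (expFunP v c) :=
  show ExpBounded c 1 (restrP v fun t _ => Real.exp (-c * t.toReal)) from
    expBounded_restrP zero_le_one fun t e _ ht => by simp [expWeight, ht]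

lemma ExpBounded.applyAt {P : ℝ → Option E → Measure (CPath E)}
    (hP : ∀ s j, IsProbabilityMeasure (P s j)) {σ : ℝ → CPath E → ℝ≥0∞}
    (hσ : ∀ s ω, ENNReal.ofReal s ≤ σ s ω) {c B : ℝ} (hc : 0 ≤ c) (hB : 0 ≤ B)
    {h : ℝ≥0∞ → Option E → ℝ} (hh : ExpBounded c B h) : ExpBounded c B (applyAt P σ h) := by
  intro t j
  by_cases ht : t = ∞
  · simp [_root_.applyAt, expWeight, ht]
  have := hP t.toReal j
  rw [_root_.applyAt, if_neg ht, ← Real.norm_eq_abs]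
  refine (norm_integral_le_of_norm_le_const (C := B * expWeight c t)
    (Eventually.of_forall fun ω => ?_)).trans (by simp)
  rw [Real.norm_eq_abs]
  refine (hh _ _).trans (mul_le_mul_of_nonneg_left ?_ hB)
  simpa [ENNReal.ofReal_toReal ht] using expWeight_antitone hc (hσ t.toReal ω)

lemma abs_applyAt_le_of_gammaJump_le [Fintype E] {v : Option E → ℝ} {M : MarkovFamily E v}
    {K c : ℝ} (GA : GenAssumption E v M K) (hc : 0 < c) {σ : ℝ → CPath E → ℝ≥0∞} {B : ℝ}
    (hB : 0 ≤ B) {h : ℝ≥0∞ → Option E → ℝ} (hh : ExpBounded c B h) {t : ℝ≥0∞} (ht : t ≠ ∞)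
    {e : E} (hσ : ∀ ω, ω t.toReal = some e → gammaJump t.toReal ω ≤ σ t.toReal ω) :
    |applyAt M.P σ h t (some e)| ≤ K / (K + c) * B * expWeight c t := by
  have hK := GA.hK
  set s := t.toReal
  have hs : 0 ≤ s := ENNReal.toReal_nonneg
  have := M.prob s (some e)
  have hinit : ∀ᵐ ω ∂M.P s (some e), ω s = some e := by
    have hmeas : MeasurableSet {ω : CPath E | ω s = some e} :=
      (show MeasurableSet ({some e} : Set (Option E)) from trivial).preimage (measurable_pi_apply s)
    rw [ae_iff, ← compl_ofPred, prob_compl_eq_zero_iff hmeas]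
    exact M.init s (some e) hs
  have hlint : ∫⁻ ω, ENNReal.ofReal ‖h (σ s ω) (Xat (σ s ω) ω)‖ ∂M.P s (some e)
      ≤ ENNReal.ofReal (K / (K + c) * B * Real.exp (-c * s)) :=
    calc ∫⁻ ω, ENNReal.ofReal ‖h (σ s ω) (Xat (σ s ω) ω)‖ ∂M.P s (some e)
        ≤ ∫⁻ ω, ENNReal.ofReal B * ENNReal.ofReal (expWeight c (gammaJump s ω))
            ∂M.P s (some e) := by
          refine lintegral_mono_ae ?_
          filter_upwards [hinit] with ω hω
          rw [← ENNReal.ofReal_mul hB, Real.norm_eq_abs]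
          exact ENNReal.ofReal_le_ofReal ((hh _ _).trans
            (mul_le_mul_of_nonneg_left (expWeight_antitone hc.le (hσ ω hω)) hB))
      _ = ENNReal.ofReal B * ∫⁻ ω, ENNReal.ofReal (expWeight c (gammaJump s ω)) ∂M.P s (some e) :=
          lintegral_const_mul' _ _ ENNReal.ofReal_ne_top
      _ ≤ ENNReal.ofReal B * ENNReal.ofReal (K / (K + c) * Real.exp (-c * s)) := by
          gcongr
          exact lintegral_expWeight_gammaJump_le GA hc hs e
      _ = ENNReal.ofReal (K / (K + c) * B * Real.exp (-c * s)) := by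
          rw [← ENNReal.ofReal_mul hB]
          ring_nf
  rw [_root_.applyAt, if_neg ht, expWeight, if_neg ht, ← Real.norm_eq_abs]
  exact (norm_integral_le_lintegral_norm _).trans
    (ENNReal.toReal_le_of_le_ofReal (by positivity) hlint)

lemma ExpBounded.opP {v : Option E → ℝ} (M : MarkovFamily E v) (ℓ : ℝ) {c B : ℝ} (hc : 0 ≤ c)
    (hB : 0 ≤ B) {h : ℝ≥0∞ → Option E → ℝ} (hh : ExpBounded c B h) :
    ExpBounded c B (opP M.P v ℓ h) :=
  expBounded_restrP hB fun t e _ _ =>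
    hh.applyAt M.prob (fun _ _ => ofReal_le_sInf_ofReal _) hc hB t (some e)

lemma ExpBounded.opM {v : Option E → ℝ} (M : MarkovFamily E v) (ℓ : ℝ) {c B : ℝ} (hc : 0 ≤ c)
    (hB : 0 ≤ B) {h : ℝ≥0∞ → Option E → ℝ} (hh : ExpBounded c B h) :
    ExpBounded c B (opM M.P v ℓ h) :=
  expBounded_restrM hB fun t e _ _ =>
    hh.applyAt M.prob (fun _ _ => ofReal_le_sInf_ofReal _) hc hB t (some e)

lemma ExpBounded.opJP [Fintype E] {v : Option E → ℝ} {M : MarkovFamily E v} {K c B : ℝ}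
    (GA : GenAssumption E v M K) (hc : 0 < c) (hB : 0 ≤ B) {h : ℝ≥0∞ → Option E → ℝ}
    (hh : ExpBounded c B h) : ExpBounded c (K / (K + c) * B) (opJP M.P v h) :=
  have := GA.hK
  expBounded_restrM (by positivity) fun _ _ he ht =>
    abs_applyAt_le_of_gammaJump_le GA hc hB hh ht fun _ hω => gammaJump_le_tauP he le_rfl hω

lemma ExpBounded.opJM [Fintype E] {v : Option E → ℝ} {M : MarkovFamily E v} {K c B : ℝ}
    (GA : GenAssumption E v M K) (hc : 0 < c) (hB : 0 ≤ B) {h : ℝ≥0∞ → Option E → ℝ}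
    (hh : ExpBounded c B h) : ExpBounded c (K / (K + c) * B) (opJM M.P v h) :=
  have := GA.hK
  expBounded_restrP (by positivity) fun _ _ he ht =>
    abs_applyAt_le_of_gammaJump_le GA hc hB hh ht fun _ hω => gammaJump_le_tauM he le_rfl hω

lemma ExpBounded.opAplus [Fintype E] {v : Option E → ℝ} {M : MarkovFamily E v} {K c B : ℝ}
    (GA : GenAssumption E v M K) (hc : 0 < c) (hB : 0 ≤ B) (ℓ : ℝ) {h : ℝ≥0∞ → Option E → ℝ}
    (hh : ExpBounded c B h) : ExpBounded c ((K / (K + c)) ^ 2 * B) (opAplus M.P v ℓ h) := by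
  have := GA.hK
  have hJ := (hh.opP M ℓ hc.le hB).opJP GA hc hB
  refine ((hJ.opM M ℓ hc.le (by positivity)).opJM GA hc (by positivity)).mono (le_of_eq ?_)
  ring

end

theorem iterated_operator_exponential_bound_general
    {E : Type*} [Fintype E] (v : Option E → ℝ)
    (M : MarkovFamily E v) (K : ℝ) (GA : GenAssumption E v M K)
    (c : ℝ) (hc : 0 < c) :
    (∫ x in (0 : ℝ)..1, (1 - (1 - x) ^ (K / c)) ^ 2) < 1 ∧
    ∀ n : ℕ, 1 ≤ n → ∀ ℓm ℓp : ℝ, 0 ≤ ℓm → 0 ≤ ℓp →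
      ∀ s : ℝ, 0 ≤ s → ∀ i : E, 0 < v (some i) →
        ((opAplus M.P v (ℓm + ℓp))^[n] (expFunP v c)) (ENNReal.ofReal s) (some i)
          ≤ (∫ x in (0 : ℝ)..1, (1 - (1 - x) ^ (K / c)) ^ 2) ^ n
            * Real.exp (-c * s) := by
  have hK := GA.hK
  have hr : 0 < K / c := div_pos hK hc
  rw [integral_one_sub_one_sub_rpow_sq hr]
  refine ⟨one_sub_two_div_add_one_div_lt_one hr, fun n _ ℓm ℓp _ _ s hs i _ => ?_⟩
  have hκ : K / (K + c) = K / c / (K / c + 1) := by field_simp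
  have hiter : ∀ k : ℕ, ExpBounded c (((K / (K + c)) ^ 2) ^ k)
      ((opAplus M.P v (ℓm + ℓp))^[k] (expFunP v c)) := by
    intro k
    induction k with
    | zero => simpa using expBounded_expFunP v c
    | succ k ih =>
      rw [Function.iterate_succ_apply', pow_succ']
      exact ih.opAplus GA hc (by positivity) _
  calc _ ≤ |((opAplus M.P v (ℓm + ℓp))^[n] (expFunP v c)) (ENNReal.ofReal s) (some i)| :=
        le_abs_self _
    _ ≤ ((K / (K + c)) ^ 2) ^ n * Real.exp (-c * s) := by
        simpa [expWeight_ofReal c hs] using hiter n (ENNReal.ofReal s) (some i)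
    _ ≤ _ := by
        rw [hκ]
        gcongr
        exact (sq_div_add_one_lt_one_sub_two_div_add_one_div hr).le

/-- (Iterated contraction bound in the proof of Lemma 3.1.) For
`g⁺(t,j) = e^{-ct}` and `C_{K,c} = ∫₀¹ (1 - (1-x)^{K/c})² dx < 1`, every `n ≥ 1` and every
`(s,i) ∈ ℝ₊ × E₊` satisfy
`((J⁻ 𝒫⁻_{ℓ⁻+ℓ⁺} J⁺ 𝒫⁺_{ℓ⁻+ℓ⁺})ⁿ g⁺)(s,i) ≤ C_{K,c}ⁿ e^{-cs}`. -/
theorem iterated_operator_exponential_bound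
    {E : Type*} [Fintype E] (hcard : 1 < Fintype.card E) (v : Option E → ℝ)
    (hv : ∀ e : E, v (some e) ≠ 0) (hv0 : v none = 0)
    (hEp : ∃ e : E, 0 < v (some e)) (hEm : ∃ e : E, v (some e) < 0)
    (M : MarkovFamily E v) (K : ℝ) (GA : GenAssumption E v M K)
    (c : ℝ) (hc : 0 < c) :
    (∫ x in (0 : ℝ)..1, (1 - (1 - x) ^ (K / c)) ^ 2) < 1 ∧
    ∀ n : ℕ, 1 ≤ n → ∀ ℓm ℓp : ℝ, 0 ≤ ℓm → 0 ≤ ℓp →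
      ∀ s : ℝ, 0 ≤ s → ∀ i : E, 0 < v (some i) →
        ((opAplus M.P v (ℓm + ℓp))^[n] (expFunP v c)) (ENNReal.ofReal s) (some i)
          ≤ (∫ x in (0 : ℝ)..1, (1 - (1 - x) ^ (K / c)) ^ 2) ^ n
            * Real.exp (-c * s) :=
  iterated_operator_exponential_bound_general v M K GA c hc
end

section
/- For every g⁺ ∈ B_b(X̄₊), every ℓ⁺, ℓ⁻ ≥ 0, and every (s,i) ∈ ℝ₊ × E, 𝔼_{s,i}[g⁺(τ_{ℓ⁺}⁺(s), X_{τ_{ℓ⁺}⁺(s)})] = (Ξ⁺_{ℓ⁻,ℓ⁺} g⁺)(s,i) + (Ξ⁻_{ℓ⁻,ℓ⁺} (J⁺ 𝒫⁺_{ℓ⁺+ℓ⁻} g⁺))(s,i). -/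
open MeasureTheory Set Filter
open scoped ENNReal

/-!
Split `𝔼[g(τ⁺_{ℓ⁺}, X_{τ⁺_{ℓ⁺}})]` according to whether `τ⁺_{ℓ⁺}` or `τ⁻_{ℓ⁻}` comes first; they
can only coincide at `∞`, because along a right-locally-constant path `v` is positive at the state
where `φ` first exceeds `ℓ⁺` and negative where it first drops below `-ℓ⁻`. The part where `τ⁺`
comes first is `Ξ⁺ g`. On the other part `φ = -ℓ⁻` at `τ⁻`, so `τ⁺_{ℓ⁺}` is the passage above
`ℓ⁺ + ℓ⁻` of the additive functional restarted at `τ⁻`. The strong Markov property at `τ⁻`, and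
then once more at the restarted `τ⁺_0`, turns this part into `Ξ⁻ J⁺ 𝒫⁺_{ℓ⁺+ℓ⁻} g`.

The paths are only known to be right-locally-constant almost surely, and `ω ↦ ∫ v(ω u) du` need not
even be measurable for the product σ-algebra. So the passage times are evaluated on the rational
right limit of the path: it equals the path almost surely, and turns them into measurable stopping
times of `𝔽ₛ`.
-/

namespace CPath

variable {E : Type*}

def IsRatRightLim (ω : CPath E) (t : ℝ) (j : Option E) : Prop :=
  ∃ q : ℚ, t < q ∧ ∀ q' : ℚ, t < q' → (q' : ℝ) ≤ q → ω q' = j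

theorem IsRatRightLim.unique {ω : CPath E} {t : ℝ} {j j' : Option E}
    (h : IsRatRightLim ω t j) (h' : IsRatRightLim ω t j') : j = j' := by
  obtain ⟨q, hq, hj⟩ := h
  obtain ⟨q', hq', hj'⟩ := h'
  obtain ⟨r, htr, hr⟩ := exists_rat_btwn (lt_min hq hq')
  rw [← hj r htr (hr.le.trans (min_le_left _ _)), hj' r htr (hr.le.trans (min_le_right _ _))]

open Classical in
/-- The right limit of `ω` along the rationals, `∂` where there is none. -/
noncomputable def regularize (ω : CPath E) : CPath E := fun t =>
  if h : ∃ j, IsRatRightLim ω t j then h.choose else none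

theorem regularize_eq_of_isRatRightLim {ω : CPath E} {t : ℝ} {j : Option E}
    (h : IsRatRightLim ω t j) : regularize ω t = j := by
  have hex : ∃ j, IsRatRightLim ω t j := ⟨j, h⟩
  rw [regularize, dif_pos hex]
  exact hex.choose_spec.unique h

theorem regularize_eq_iff {ω : CPath E} {t : ℝ} {j : Option E} :
    regularize ω t = j ↔ IsRatRightLim ω t j ∨ (j = none ∧ ∀ j', ¬ IsRatRightLim ω t j') := by
  by_cases hex : ∃ j', IsRatRightLim ω t j'
  · obtain ⟨j', hj'⟩ := hex
    rw [regularize_eq_of_isRatRightLim hj']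
    exact ⟨fun h => .inl (h ▸ hj'), fun h => h.elim hj'.unique fun h => (h.2 j' hj').elim⟩
  · rw [regularize, dif_neg hex]
    exact ⟨fun h => .inr ⟨h.symm, not_exists.mp hex⟩,
      fun h => h.elim (fun h => (hex ⟨j, h⟩).elim) fun h => h.1.symm⟩

theorem regularize_congr {ω ω' : CPath E} {t b : ℝ} (htb : t < b)
    (h : ∀ q : ℚ, t < q → (q : ℝ) < b → ω q = ω' q) : regularize ω t = regularize ω' t := by
  suffices key : ∀ {ω ω' : CPath E}, (∀ q : ℚ, t < q → (q : ℝ) < b → ω q = ω' q) →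
      ∀ {j}, IsRatRightLim ω t j → IsRatRightLim ω' t j by
    have hiff : ∀ j, IsRatRightLim ω t j ↔ IsRatRightLim ω' t j := fun j =>
      ⟨key h, key fun q hq hqb => (h q hq hqb).symm⟩
    by_cases hex : ∃ j, IsRatRightLim ω t j
    · obtain ⟨j, hj⟩ := hex
      rw [regularize_eq_of_isRatRightLim hj, regularize_eq_of_isRatRightLim ((hiff j).mp hj)]
    · rw [regularize, regularize, dif_neg hex, dif_neg (by simpa only [hiff] using hex)]
  intro ω ω' h j ⟨q, hq, hj⟩
  obtain ⟨r, htr, hr⟩ := exists_rat_btwn (lt_min hq htb)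
  refine ⟨r, htr, fun q' hq' hle => ?_⟩
  rw [← h q' hq' (hle.trans_lt (hr.trans_le (min_le_right _ _)))]
  exact hj q' hq' (hle.trans (hr.le.trans (min_le_left _ _)))

theorem regularize_congr_of_forall_ge {ω ω' : CPath E} {a : ℝ} (h : ∀ u, a ≤ u → ω u = ω' u)
    {u : ℝ} (hu : a ≤ u) : regularize ω u = regularize ω' u :=
  regularize_congr (lt_add_one u) fun q hq _ => h q (hu.trans hq.le)

theorem measurable_isRatRightLim (j : Option E) :
    Measurable fun p : ℝ × CPath E => IsRatRightLim p.2 p.1 j := by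
  have hlt : ∀ q : ℚ, Measurable fun p : ℝ × CPath E => p.1 < q := fun q =>
    measurableSet_setOfPred.mp (measurableSet_lt measurable_fst measurable_const)
  refine Measurable.exists fun q => (hlt q).and <| Measurable.forall fun q' =>
    (hlt q').imp <| measurable_const.imp <|
      (Measurable.of_discrete (f := (· = j))).comp ((measurable_pi_apply _).comp measurable_snd)

theorem measurable_regularize_uncurry [Countable E] :
    Measurable fun p : ℝ × CPath E => regularize p.2 p.1 := by
  refine measurable_to_countable' fun j => ?_
  simp only [Set.preimage, Set.mem_singleton_iff, regularize_eq_iff]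
  exact measurableSet_setOfPred.mpr <| (measurable_isRatRightLim j).or <| measurable_const.and <|
    Measurable.forall fun j' => (measurable_isRatRightLim j').not

def IsRightLocConst (a : ℝ) (ω : CPath E) : Prop :=
  ∀ t, a ≤ t → ∃ ε > 0, ∀ u ∈ Ico t (t + ε), ω u = ω t

theorem IsRightLocConst.regularize_eq {a : ℝ} {ω : CPath E} (h : IsRightLocConst a ω) {t : ℝ}
    (ht : a ≤ t) : regularize ω t = ω t := by
  obtain ⟨ε, hε, hconst⟩ := h t ht
  obtain ⟨q, htq, hq⟩ := exists_rat_btwn (lt_add_of_pos_right t hε)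
  exact regularize_eq_of_isRatRightLim
    ⟨q, htq, fun q' hq' hle => hconst q' ⟨hq'.le, hle.trans_lt hq⟩⟩

theorem IsRightLocConst.regularize {a : ℝ} {ω : CPath E} (h : IsRightLocConst a ω) :
    IsRightLocConst a (regularize ω) := fun t ht => by
  obtain ⟨ε, hε, hconst⟩ := h t ht
  refine ⟨ε, hε, fun u hu => ?_⟩
  rw [h.regularize_eq (ht.trans hu.1), h.regularize_eq ht, hconst u hu]

end CPath

open Topology

section PassageTimes

variable {E : Type*} {v : Option E → ℝ} {a b u L s ℓm ℓp : ℝ} {ω ω' : CPath E}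

theorem phi_self : phi v a a ω = 0 := intervalIntegral.integral_same

theorem phi_add (hint : LocallyIntegrable fun u => v (ω u)) (c : ℝ) :
    phi v a b ω + phi v b c ω = phi v a c ω :=
  intervalIntegral.integral_add_adjacent_intervals
    (hint.integrableOn_isCompact isCompact_uIcc).intervalIntegrable
    (hint.integrableOn_isCompact isCompact_uIcc).intervalIntegrable

theorem continuous_phi (hint : LocallyIntegrable fun u => v (ω u)) :
    Continuous fun b => phi v a b ω :=
  intervalIntegral.continuous_primitive
    (fun _ _ => (hint.integrableOn_isCompact isCompact_uIcc).intervalIntegrable) a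

theorem phi_neg : phi (fun j => -v j) a b ω = -phi v a b ω := intervalIntegral.integral_neg

theorem phi_congr (hab : a ≤ b) (h : ∀ u ∈ Icc a b, ω u = ω' u) : phi v a b ω = phi v a b ω' :=
  intervalIntegral.integral_congr fun u hu => by
    rw [uIcc_of_le hab] at hu
    simp only [h u hu]

theorem phi_eq_of_forall_eq {j : Option E} (hab : a ≤ b) (h : ∀ u ∈ Icc a b, ω u = j) :
    phi v a b ω = (b - a) * v j := by
  rw [phi, intervalIntegral.integral_congr (g := fun _ => v j) fun u hu => ?_,
    intervalIntegral.integral_const, smul_eq_mul]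
  rw [uIcc_of_le hab] at hu
  simp only [h u hu]

theorem tauP_congr (h : ∀ u, a ≤ u → ω u = ω' u) : tauP v a L ω = tauP v a L ω' := by
  have hphi : ∀ u, a ≤ u → phi v a u ω = phi v a u ω' := fun u hau =>
    phi_congr hau fun r hr => h r hr.1
  simp only [tauP]
  congr 1
  ext t
  exact exists_congr fun u => and_congr_right fun hau => by rw [hphi u hau]

theorem tauM_eq_tauP_neg : tauM v a L ω = tauP (fun j => -v j) a L ω := by
  simp only [tauM, tauP, phi_neg, lt_neg]

theorem tauM_congr (h : ∀ u, a ≤ u → ω u = ω' u) : tauM v a L ω = tauM v a L ω' := by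
  simp only [tauM_eq_tauP_neg, tauP_congr h]

theorem ofReal_le_tauP : ENNReal.ofReal a ≤ tauP v a L ω :=
  le_sInf fun _ ⟨_, hau, ht, _⟩ => ht ▸ ENNReal.ofReal_le_ofReal hau

theorem tauP_le (hau : a ≤ u) (h : L < phi v a u ω) : tauP v a L ω ≤ ENNReal.ofReal u :=
  sInf_le ⟨u, hau, rfl, h⟩

theorem le_toReal_tauP (h : tauP v a L ω ≠ ∞) : a ≤ (tauP v a L ω).toReal :=
  (le_max_left a 0).trans <|
    ENNReal.toReal_ofReal'.symm.trans_le (ENNReal.toReal_mono h ofReal_le_tauP)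

theorem ofReal_le_tauM : ENNReal.ofReal a ≤ tauM v a L ω :=
  tauM_eq_tauP_neg (v := v) ▸ ofReal_le_tauP

theorem le_toReal_tauM (h : tauM v a L ω ≠ ∞) : a ≤ (tauM v a L ω).toReal := by
  rw [tauM_eq_tauP_neg] at h ⊢
  exact le_toReal_tauP h

theorem tauP_mono {L' : ℝ} (hLL' : L ≤ L') : tauP v a L ω ≤ tauP v a L' ω :=
  sInf_le_sInf fun _ ⟨u, hau, ht, hu⟩ => ⟨u, hau, ht, hLL'.trans_lt hu⟩

theorem phi_le_of_ofReal_lt_tauP (hau : a ≤ u) (hu : ENNReal.ofReal u < tauP v a L ω) :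
    phi v a u ω ≤ L :=
  not_lt.mp fun h => (tauP_le hau h).not_gt hu

theorem exists_phi_gt_of_tauP_lt {x : ℝ≥0∞} (h : tauP v a L ω < x) :
    ∃ u, a ≤ u ∧ ENNReal.ofReal u < x ∧ L < phi v a u ω := by
  obtain ⟨_, ⟨u, hau, rfl, hu⟩, hux⟩ := sInf_lt_iff.mp h
  exact ⟨u, hau, hux, hu⟩

theorem frequently_phi_gt_tauP (ha : 0 ≤ a) (h : tauP v a L ω ≠ ∞) :
    ∃ᶠ u in 𝓝[≥] (tauP v a L ω).toReal, L < phi v a u ω := by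
  refine frequently_iff.mpr fun hU => ?_
  obtain ⟨ρ', hρ', hsub⟩ := mem_nhdsGE_iff_exists_Ico_subset.mp hU
  have hlt : tauP v a L ω < ENNReal.ofReal ρ' := by
    rwa [← ENNReal.ofReal_toReal h,
      ENNReal.ofReal_lt_ofReal_iff (ENNReal.toReal_nonneg.trans_lt hρ')]
  obtain ⟨u, hau, hu, hL⟩ := exists_phi_gt_of_tauP_lt hlt
  have hρu : (tauP v a L ω).toReal ≤ u := by
    simpa [ENNReal.toReal_ofReal (ha.trans hau)] using ENNReal.toReal_mono ENNReal.ofReal_ne_top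
      (tauP_le hau hL)
  exact ⟨u, hsub ⟨hρu, (ENNReal.ofReal_lt_ofReal_iff'.mp hu).1⟩, hL⟩

theorem phi_tauP (hint : LocallyIntegrable fun u => v (ω u))
    (ha : 0 ≤ a) (hL : 0 ≤ L) (h : tauP v a L ω ≠ ∞) : phi v a (tauP v a L ω).toReal ω = L := by
  set ρ := (tauP v a L ω).toReal
  have hcont : Tendsto (fun u => phi v a u ω) (𝓝 ρ) (𝓝 (phi v a ρ ω)) :=
    (continuous_phi hint).tendsto ρ
  refine le_antisymm ?_ (isClosed_Ici.mem_of_frequently_of_tendsto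
    ((frequently_phi_gt_tauP ha h).mono fun _ hu => le_of_lt hu)
    (hcont.mono_left nhdsWithin_le_nhds))
  obtain hρ | hρ := (show a ≤ ρ from le_toReal_tauP h).eq_or_lt
  · rw [← hρ, phi_self]
    exact hL
  refine isClosed_Iic.mem_of_tendsto (hcont.mono_left (nhdsWithin_le_nhds (s := Iio ρ))) ?_
  filter_upwards [Ioo_mem_nhdsLT hρ] with u hu
  refine phi_le_of_ofReal_lt_tauP hu.1.le ?_
  rw [← ENNReal.ofReal_toReal h]
  exact (ENNReal.ofReal_lt_ofReal_iff (ha.trans_lt hu.1 |>.trans hu.2)).mpr hu.2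

theorem phi_le_of_le_tauP (hint : LocallyIntegrable fun u => v (ω u))
    (ha : 0 ≤ a) (hL : 0 ≤ L) (h : tauP v a L ω ≠ ∞) (hau : a ≤ u)
    (hu : u ≤ (tauP v a L ω).toReal) : phi v a u ω ≤ L := by
  rcases hu.eq_or_lt with rfl | hu
  · exact (phi_tauP hint ha hL h).le
  refine phi_le_of_ofReal_lt_tauP hau ?_
  rw [← ENNReal.ofReal_toReal h]
  exact (ENNReal.ofReal_lt_ofReal_iff ((ha.trans hau).trans_lt hu)).mpr hu

theorem v_at_tauP_pos (hint : LocallyIntegrable fun u => v (ω u))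
    (hω : CPath.IsRightLocConst a ω) (ha : 0 ≤ a) (hL : 0 ≤ L) (h : tauP v a L ω ≠ ∞) :
    0 < v (ω (tauP v a L ω).toReal) := by
  set ρ := (tauP v a L ω).toReal
  obtain ⟨ε, hε, hconst⟩ := hω ρ (le_toReal_tauP h)
  obtain ⟨u, hu, hρu, huε⟩ :=
    ((frequently_phi_gt_tauP ha h).and_eventually
      (Ico_mem_nhdsGE (lt_add_of_pos_right ρ hε))).exists
  have hstep : phi v ρ u ω = (u - ρ) * v (ω ρ) :=
    phi_eq_of_forall_eq hρu fun r hr => hconst r ⟨hr.1, hr.2.trans_lt huε⟩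
  have hρ : phi v a ρ ω = L := phi_tauP hint ha hL h
  have hadd := phi_add hint (a := a) (b := ρ) u
  have hprod : 0 < (u - ρ) * v (ω ρ) := by linarith
  exact pos_of_mul_pos_right hprod (sub_nonneg.mpr hρu)

theorem phi_tauM (hint : LocallyIntegrable fun u => v (ω u))
    (ha : 0 ≤ a) (hL : 0 ≤ L) (h : tauM v a L ω ≠ ∞) : phi v a (tauM v a L ω).toReal ω = -L := by
  rw [tauM_eq_tauP_neg] at h ⊢
  have := phi_tauP (hint.neg) ha hL h
  rw [phi_neg] at this
  linarith

theorem v_at_tauM_neg (hint : LocallyIntegrable fun u => v (ω u))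
    (hω : CPath.IsRightLocConst a ω) (ha : 0 ≤ a) (hL : 0 ≤ L) (h : tauM v a L ω ≠ ∞) :
    v (ω (tauM v a L ω).toReal) < 0 := by
  rw [tauM_eq_tauP_neg] at h ⊢
  exact neg_pos.mp (v_at_tauP_pos (hint.neg) hω ha hL h)

theorem tauP_eq_top_of_eq_tauM (hint : LocallyIntegrable fun u => v (ω u))
    (hω : CPath.IsRightLocConst a ω) (ha : 0 ≤ a) (hℓm : 0 ≤ ℓm) (hℓp : 0 ≤ ℓp)
    (h : tauP v a ℓp ω = tauM v a ℓm ω) : tauP v a ℓp ω = ∞ := by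
  by_contra hfin
  have hpos := v_at_tauP_pos hint hω ha hℓp hfin
  rw [h] at hfin hpos
  exact (v_at_tauM_neg hint hω ha hℓm hfin).not_gt hpos

theorem tauP_eq_tauP_of_phi_le (hint : LocallyIntegrable fun u => v (ω u))
    (hab : a ≤ b) (hpre : ∀ u, a ≤ u → u ≤ b → phi v a u ω ≤ L) :
    tauP v a L ω = tauP v b (L - phi v a b ω) ω := by
  simp only [tauP]
  congr 1
  ext t
  refine exists_congr fun u => ?_
  have hadd := phi_add hint (a := a) (b := b) u
  constructor
  · rintro ⟨hau, ht, hu⟩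
    have hbu : b ≤ u := not_lt.mp fun hub => (hpre u hau hub.le).not_gt hu
    exact ⟨hbu, ht, by linarith⟩
  · rintro ⟨hbu, ht, hu⟩
    exact ⟨hab.trans hbu, ht, by linarith⟩

theorem tauP_eq_tauP_after_tauP_zero
    (hint : LocallyIntegrable fun u => v (ω u)) (ha : 0 ≤ a) (hL : 0 ≤ L)
    (h : tauP v a 0 ω ≠ ∞) : tauP v a L ω = tauP v (tauP v a 0 ω).toReal L ω := by
  rw [tauP_eq_tauP_of_phi_le hint (le_toReal_tauP h) fun u hau hu =>
    (phi_le_of_le_tauP hint ha le_rfl h hau hu).trans hL, phi_tauP hint ha le_rfl h, sub_zero]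

theorem tauP_eq_tauP_after_tauM
    (hint : LocallyIntegrable fun u => v (ω u)) (ha : 0 ≤ a) (hℓm : 0 ≤ ℓm)
    (h : tauM v a ℓm ω < tauP v a ℓp ω) :
    tauP v a ℓp ω = tauP v (tauM v a ℓm ω).toReal (ℓp + ℓm) ω := by
  have hfin : tauM v a ℓm ω ≠ ∞ := h.ne_top
  have hpre : ∀ u, a ≤ u → u ≤ (tauM v a ℓm ω).toReal → phi v a u ω ≤ ℓp := fun u hau hu =>
    phi_le_of_ofReal_lt_tauP hau <| lt_of_le_of_lt
      (by simpa [ENNReal.ofReal_toReal hfin] using ENNReal.ofReal_le_ofReal hu) h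
  rw [tauP_eq_tauP_of_phi_le hint (le_toReal_tauM hfin) hpre, phi_tauM hint ha hℓm hfin,
    sub_neg_eq_add]

theorem xiP_congr (h : ∀ u, s ≤ u → ω u = ω' u) : xiP v ℓm ℓp s ω = xiP v ℓm ℓp s ω' := by
  simp only [xiP, tauP_congr h, tauM_congr h]

theorem xiM_congr (h : ∀ u, s ≤ u → ω u = ω' u) : xiM v ℓm ℓp s ω = xiM v ℓm ℓp s ω' := by
  simp only [xiM, tauP_congr h, tauM_congr h]

theorem le_toReal_xiP (h : xiP v ℓm ℓp s ω ≠ ∞) : s ≤ (xiP v ℓm ℓp s ω).toReal := by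
  unfold xiP at h ⊢
  split_ifs at h ⊢
  exacts [le_toReal_tauP h, (h rfl).elim]

theorem ofReal_le_xiM : ENNReal.ofReal s ≤ xiM v ℓm ℓp s ω := by
  unfold xiM
  split_ifs
  exacts [ofReal_le_tauM, le_top]

theorem le_toReal_xiM (h : xiM v ℓm ℓp s ω ≠ ∞) : s ≤ (xiM v ℓm ℓp s ω).toReal := by
  unfold xiM at h ⊢
  split_ifs at h ⊢
  exacts [le_toReal_tauM h, (h rfl).elim]

theorem v_at_xiM_neg (hint : LocallyIntegrable fun u => v (ω u))
    (hω : CPath.IsRightLocConst s ω) (hs : 0 ≤ s) (hℓm : 0 ≤ ℓm) (h : xiM v ℓm ℓp s ω ≠ ∞) :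
    v (ω (xiM v ℓm ℓp s ω).toReal) < 0 := by
  unfold xiM at h ⊢
  split_ifs at h ⊢
  exacts [v_at_tauM_neg hint hω hs hℓm h, (h rfl).elim]

end PassageTimes

section Measurability

variable {E : Type*} {v : Option E → ℝ} {a L : ℝ} {ω : CPath E}

theorem tauP_lt_iff (hint : LocallyIntegrable fun u => v (ω u)) {x : ℝ≥0∞} :
    tauP v a L ω < x ↔ ∃ q : ℚ, a ≤ q ∧ L < phi v a q ω ∧ ENNReal.ofReal q < x := by
  refine ⟨fun h => ?_, fun ⟨q, haq, hq, hqx⟩ => (tauP_le haq hq).trans_lt hqx⟩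
  obtain ⟨u, hau, hux, hu⟩ := exists_phi_gt_of_tauP_lt h
  have hopen : IsOpen {r | L < phi v a r ω ∧ ENNReal.ofReal r < x} :=
    (isOpen_lt continuous_const (continuous_phi hint)).inter
      (isOpen_lt ENNReal.continuous_ofReal continuous_const)
  obtain ⟨δ, hδ, hball⟩ := Metric.isOpen_iff.mp hopen u ⟨hu, hux⟩
  obtain ⟨q, huq, hq⟩ := exists_rat_btwn (lt_add_of_pos_right u hδ)
  obtain ⟨hLq, hqx⟩ : L < phi v a q ω ∧ ENNReal.ofReal q < x :=
    hball (by rw [Metric.mem_ball, Real.dist_eq, abs_lt]; constructor <;> linarith)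
  exact ⟨q, hau.trans huq.le, hLq, hqx⟩

variable [Finite E]

theorem locallyIntegrable_regularize (v : Option E → ℝ) (ω : CPath E) :
    LocallyIntegrable fun u => v (CPath.regularize ω u) := by
  obtain ⟨C, hC⟩ := Finite.exists_le fun j => |v j|
  refine (locallyIntegrable_const C).mono ?_ (ae_of_all _ fun u => (hC _).trans (le_abs_self C))
  exact ((Measurable.of_discrete (f := v)).comp (CPath.measurable_regularize_uncurry.comp
    (measurable_id.prodMk measurable_const))).aestronglyMeasurable

theorem measurable_phi_regularize (v : Option E → ℝ) (a b : ℝ) :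
    Measurable fun ω => phi v a b (CPath.regularize ω) := by
  have hf : StronglyMeasurable fun p : CPath E × ℝ => v (CPath.regularize p.1 p.2) :=
    ((Measurable.of_discrete (f := v)).comp
      (CPath.measurable_regularize_uncurry.comp measurable_swap)).stronglyMeasurable
  -- `∫ u in a..b` is by definition `∫ u in Ioc a b - ∫ u in Ioc b a`
  exact (hf.integral_prod_right' (ν := volume.restrict (Ioc a b))).measurable.sub
    (hf.integral_prod_right' (ν := volume.restrict (Ioc b a))).measurable

theorem measurable_phi_regularize_uncurry (v : Option E → ℝ) (b : ℝ) :
    Measurable fun p : ℝ × CPath E => phi v p.1 b (CPath.regularize p.2) := by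
  have hjoint : Measurable fun p : ℝ × CPath E => phi v 0 p.1 (CPath.regularize p.2) :=
    measurable_uncurry_of_continuous_of_measurable (u := fun c ω => phi v 0 c (CPath.regularize ω))
      (fun ω => continuous_phi (locallyIntegrable_regularize v ω))
      (measurable_phi_regularize v 0)
  have hsplit : ∀ p : ℝ × CPath E, phi v p.1 b (CPath.regularize p.2)
      = phi v 0 b (CPath.regularize p.2) - phi v 0 p.1 (CPath.regularize p.2) := fun p => by
    linarith [phi_add (locallyIntegrable_regularize v p.2) (a := 0) (b := p.1) b]
  simp only [hsplit]
  exact ((measurable_phi_regularize v 0 b).comp measurable_snd).sub hjoint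

theorem measurable_tauP_regularize (v : Option E → ℝ) (L : ℝ) :
    Measurable fun p : ℝ × CPath E => tauP v p.1 L (CPath.regularize p.2) := by
  refine measurable_of_Iio fun x => ?_
  simp only [Set.preimage, Set.mem_Iio, tauP_lt_iff (locallyIntegrable_regularize v _)]
  refine measurableSet_setOfPred.mpr (Measurable.exists fun q => Measurable.and ?_ ?_)
  · exact measurableSet_setOfPred.mp (measurableSet_le measurable_fst measurable_const)
  · exact (measurableSet_setOfPred.mp (measurableSet_lt measurable_const
      (measurable_phi_regularize_uncurry v q))).and measurable_const

theorem measurable_tauP_comp_regularize (v : Option E → ℝ) (a L : ℝ) :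
    Measurable fun ω => tauP v a L (CPath.regularize ω) :=
  (measurable_tauP_regularize v L).comp (measurable_const.prodMk measurable_id)

theorem measurable_xiP_regularize (v : Option E → ℝ) (ℓm ℓp s : ℝ) :
    Measurable fun ω => xiP v ℓm ℓp s (CPath.regularize ω) := by
  have hM := measurable_tauP_comp_regularize (fun j => -v j) s ℓm
  simp only [← tauM_eq_tauP_neg] at hM
  exact Measurable.ite (measurableSet_lt (measurable_tauP_comp_regularize v s ℓp) hM)
    (measurable_tauP_comp_regularize v s ℓp) measurable_const

theorem measurable_xiM_regularize (v : Option E → ℝ) (ℓm ℓp s : ℝ) :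
    Measurable fun ω => xiM v ℓm ℓp s (CPath.regularize ω) := by
  have hM := measurable_tauP_comp_regularize (fun j => -v j) s ℓm
  simp only [← tauM_eq_tauP_neg] at hM
  exact Measurable.ite (measurableSet_lt hM (measurable_tauP_comp_regularize v s ℓp)) hM
    measurable_const

end Measurability

section StoppingTimes

variable {E : Type*} {s : ℝ}

theorem Fst_mono {t t' : ℝ≥0∞} (htt' : t ≤ t') (ht' : t' ≠ ∞) : Fst (E := E) s t ≤ Fst s t' := by
  simp only [Fst, if_neg ht', if_neg (ne_top_of_le_ne_top ht' htt')]
  exact le_iInf₂ fun r hr => iInf₂_le r ((ENNReal.toReal_mono ht' htt').trans_lt hr)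

theorem Fst_top_le_pi : Fst (E := E) s ∞ ≤ MeasurableSpace.pi := by
  simp only [Fst]
  exact iSup₂_le fun u _ => (measurable_pi_apply u).comap_le

theorem isST_of_measurableSet_lt {τ : CPath E → ℝ≥0∞}
    (h : ∀ (q : ℚ) (r : ℝ), (q : ℝ) < r → MeasurableSet[natF s r] {ω | τ ω < ENNReal.ofReal q}) :
    IsST s τ := by
  intro t
  by_cases ht : t = ∞
  · simp only [ht, le_top, ofPred_true, MeasurableSet.univ]
  unfold Fst
  rw [if_neg ht]
  refine MeasurableSpace.measurableSet_iInf.mpr fun r =>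
    MeasurableSpace.measurableSet_iInf.mpr fun hr => ?_
  have htr : t < ENNReal.ofReal r := by
    rwa [← ENNReal.ofReal_toReal ht,
      ENNReal.ofReal_lt_ofReal_iff (ENNReal.toReal_nonneg.trans_lt hr)]
  have hset : {ω | τ ω ≤ t} = ⋂ (q : ℚ) (_ : t < ENNReal.ofReal q ∧ (q : ℝ) < r),
      {ω | τ ω < ENNReal.ofReal q} := by
    ext ω
    simp only [mem_ofPred_eq, mem_iInter]
    refine ⟨fun hτ q hq => hτ.trans_lt hq.1, fun hτ => not_lt.mp fun htτ => ?_⟩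
    obtain ⟨q, -, htq, hq⟩ := ENNReal.lt_iff_exists_rat_btwn.mp (lt_min htτ htr)
    have hqr : (q : ℝ) < r := (ENNReal.ofReal_lt_ofReal_iff'.mp (hq.trans_le (min_le_right _ _))).1
    exact (hτ q ⟨htq, hqr⟩).not_gt (hq.trans_le (min_le_left _ _))
  rw [hset]
  exact MeasurableSet.iInter fun q => MeasurableSet.iInter fun hq => h q r hq.2

theorem measurable_natF_of_eqOn {β : Type*} [MeasurableSpace β] {r : ℝ} {D : Set ℝ}
    (hD : D ⊆ Icc s r) {f : CPath E → β} (hf : Measurable f)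
    (hdep : ∀ ω ω', EqOn ω ω' D → f ω = f ω') : Measurable[natF s r] f := by
  classical
  let extend : (D → Option E) → CPath E := fun x u => if h : u ∈ D then x ⟨u, h⟩ else none
  have hextend : Measurable extend := measurable_pi_lambda _ fun u => by
    by_cases hu : u ∈ D
    · simpa only [extend, dif_pos hu] using measurable_pi_apply _
    · simpa only [extend, dif_neg hu] using measurable_const
  have hrestrict : Measurable[natF s r] fun (ω : CPath E) (u : D) => ω u :=
    @measurable_pi_iff _ _ _ (natF s r) _ _ |>.mpr fun u => Measurable.of_comap_le <|
      le_iSup₂ (f := fun u (_ : u ∈ Icc s r) => MeasurableSpace.comap (fun ω : CPath E => ω u) ⊤)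
        (u : ℝ) (hD u.2)
  have hfac : f = (f ∘ extend) ∘ fun (ω : CPath E) (u : D) => ω u :=
    funext fun ω => hdep _ _ fun u hu => by simp only [extend, dif_pos hu]
  rw [hfac]
  exact (hf.comp hextend).comp hrestrict

theorem isST_tauP_regularize [Finite E] (v : Option E → ℝ) (L : ℝ) :
    IsST s fun ω => tauP v s L (CPath.regularize ω) := by
  refine isST_of_measurableSet_lt fun x r hxr => ?_
  have hset : {ω : CPath E | tauP v s L (CPath.regularize ω) < ENNReal.ofReal x}
      = ⋃ q ∈ {q : ℚ | s ≤ q ∧ ENNReal.ofReal q < ENNReal.ofReal x},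
          {ω | L < phi v s q (CPath.regularize ω)} := by
    ext ω
    simp only [mem_ofPred_eq, mem_iUnion, tauP_lt_iff (locallyIntegrable_regularize v _),
      exists_prop]
    exact exists_congr fun q => by tauto
  rw [hset]
  refine MeasurableSet.biUnion (to_countable _) fun q ⟨hsq, hqx⟩ => ?_
  have hqr : (q : ℝ) < r := (ENNReal.ofReal_lt_ofReal_iff'.mp hqx).1.trans hxr
  refine measurable_natF_of_eqOn (D := Icc s r ∩ range ((↑) : ℚ → ℝ)) inter_subset_left
    (measurable_phi_regularize v s q) (fun ω ω' h => ?_) measurableSet_Ioi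
  refine phi_congr hsq fun u hu => CPath.regularize_congr (hu.2.trans_lt hqr) fun q' hq' hq'r => ?_
  exact h ⟨⟨hu.1.trans hq'.le, hq'r.le⟩, q', rfl⟩

theorem IsST.ite_lt {σ τ : CPath E → ℝ≥0∞} (hσ : IsST s σ) (hτ : IsST s τ) :
    IsST s fun ω => if σ ω < τ ω then σ ω else ∞ := by
  intro t
  by_cases ht : t = ∞
  · simp only [ht, le_top, ofPred_true, MeasurableSet.univ]
  -- if `σ < τ` and `σ ≤ t`, then either `t < τ` or a rational time `q ≤ t` separates `σ` and `τ`
  have hset : {ω | (if σ ω < τ ω then σ ω else ∞) ≤ t}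
      = ({ω | σ ω ≤ t} ∩ {ω | τ ω ≤ t}ᶜ) ∪ ⋃ (q : ℚ) (_ : ENNReal.ofReal q ≤ t),
          {ω | σ ω ≤ ENNReal.ofReal q} ∩ {ω | τ ω ≤ ENNReal.ofReal q}ᶜ := by
    ext ω
    simp only [mem_ofPred_eq, mem_union, mem_inter_iff, mem_compl_iff, mem_iUnion, not_le]
    split_ifs with h
    · refine ⟨fun hσt => ?_, ?_⟩
      · by_cases hτt : τ ω ≤ t
        · obtain ⟨q, -, hσq, hqτ⟩ := ENNReal.lt_iff_exists_rat_btwn.mp h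
          exact .inr ⟨q, hqτ.le.trans hτt, hσq.le, hqτ⟩
        · exact .inl ⟨hσt, not_le.mp hτt⟩
      · rintro (⟨hσt, -⟩ | ⟨q, hqt, hσq, -⟩)
        exacts [hσt, hσq.trans hqt]
    · simp only [top_le_iff, ht, false_iff, not_or, not_exists, not_and]
      exact ⟨fun hσt htτ => h (hσt.trans_lt htτ), fun q _ hσq hqτ => h (hσq.trans_lt hqτ)⟩
  rw [hset]
  refine ((hσ t).inter (hτ t).compl).union
    (MeasurableSet.iUnion fun q => MeasurableSet.iUnion fun hq => ?_)
  exact Fst_mono hq ht _ ((hσ _).inter (hτ _).compl)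

theorem isST_xiM_regularize [Finite E] (v : Option E → ℝ) (ℓm ℓp : ℝ) :
    IsST s fun ω => xiM v ℓm ℓp s (CPath.regularize ω) := by
  have hM : IsST s fun ω => tauM v s ℓm (CPath.regularize ω) := by
    simpa only [tauM_eq_tauP_neg] using isST_tauP_regularize (fun j => -v j) ℓm
  exact hM.ite_lt (isST_tauP_regularize v ℓp)

end StoppingTimes

section StrongMarkov

variable {E : Type*} {v : Option E → ℝ} {g : ℝ≥0∞ → Option E → ℝ} {a L : ℝ} {ω ω' : CPath E}

noncomputable def valueAt (g : ℝ≥0∞ → Option E → ℝ) (T : ℝ≥0∞) (ω : CPath E) : ℝ := g T (Xat T ω)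

theorem valueAt_top : valueAt g ∞ ω = g ∞ none := by
  simp only [valueAt, Xat, ↓reduceIte]

theorem valueAt_of_ne_top {T : ℝ≥0∞} (hT : T ≠ ∞) : valueAt g T ω = g T (ω T.toReal) := by
  simp only [valueAt, Xat, if_neg hT]

theorem valueAt_congr {T : ℝ≥0∞} (hT : T ≠ ∞ → a ≤ T.toReal) (h : ∀ u, a ≤ u → ω u = ω' u) :
    valueAt g T ω = valueAt g T ω' := by
  by_cases hfin : T = ∞
  · rw [hfin, valueAt_top, valueAt_top]
  · rw [valueAt_of_ne_top hfin, valueAt_of_ne_top hfin, h _ (hT hfin)]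

theorem valueAt_tauP_congr (h : ∀ u, a ≤ u → ω u = ω' u) :
    valueAt g (tauP v a L ω) ω = valueAt g (tauP v a L ω') ω' := by
  rw [tauP_congr h]
  exact valueAt_congr le_toReal_tauP h

theorem measurable_valueAt_regularize [Finite E] (hg : ∀ j, Measurable fun t => g t j) :
    Measurable fun p : ℝ≥0∞ × CPath E => valueAt g p.1 (CPath.regularize p.2) := by
  have hX : Measurable fun p : ℝ≥0∞ × CPath E => Xat p.1 (CPath.regularize p.2) :=
    Measurable.ite (measurable_fst (measurableSet_singleton ∞)) measurable_const
      (CPath.measurable_regularize_uncurry.comp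
        ((ENNReal.measurable_toReal.comp measurable_fst).prodMk measurable_snd))
  exact (measurable_from_prod_countable_left (f := fun q : ℝ≥0∞ × Option E => g q.1 q.2) hg).comp
    (measurable_fst.prodMk hX)

theorem integrable_valueAt_regularize [Finite E] {μ : Measure (CPath E)} [IsFiniteMeasure μ]
    (hg : ∀ j, Measurable fun t => g t j) (hgb : ∃ C, ∀ t j, |g t j| ≤ C)
    {T : CPath E → ℝ≥0∞} (hT : Measurable T) :
    Integrable (fun ω => valueAt g (T ω) (CPath.regularize ω)) μ := by
  obtain ⟨C, hC⟩ := hgb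
  exact Integrable.of_bound ((measurable_valueAt_regularize hg).comp
    (hT.prodMk measurable_id)).aestronglyMeasurable C (ae_of_all _ fun _ => hC _ _)

namespace MarkovFamily

variable (M : MarkovFamily E v)

theorem ae_isRightLocConst (ha : 0 ≤ a) (j : Option E) :
    ∀ᵐ ω ∂M.P a j, CPath.IsRightLocConst a ω :=
  (M.pathReg a j ha).mono fun _ h => h.1

theorem integral_comp_regularize {F : CPath E → ℝ} (ha : 0 ≤ a)
    (hF : ∀ ω ω', (∀ u, a ≤ u → ω u = ω' u) → F ω = F ω') (j : Option E) :
    ∫ ω, F (CPath.regularize ω) ∂M.P a j = ∫ ω, F ω ∂M.P a j :=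
  integral_congr_ae <| (M.ae_isRightLocConst ha j).mono fun _ hω =>
    hF _ _ fun _ hu => hω.regularize_eq hu

theorem integral_strongMarkov {s : ℝ} (hs : 0 ≤ s) (j : Option E) {τ : CPath E → ℝ≥0∞}
    (hτ : IsST s τ) (hτs : ∀ ω, ENNReal.ofReal s ≤ τ ω) {G : ℝ≥0∞ → CPath E → ℝ}
    (hGm : Measurable (Function.uncurry G)) (hGb : ∃ C, ∀ t ω, |G t ω| ≤ C)
    (hGf : ∀ (t : ℝ) (ω ω' : CPath E), (∀ u, t ≤ u → ω u = ω' u) →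
      G (ENNReal.ofReal t) ω = G (ENNReal.ofReal t) ω') :
    ∫ ω, {ω' | τ ω' ≠ ∞}.indicator (fun ω' => G (τ ω') ω') ω ∂M.P s j
      = ∫ ω, {ω' | τ ω' ≠ ∞}.indicator
          (fun ω' => ∫ ω'', G (τ ω') ω'' ∂M.P (τ ω').toReal (ω' (τ ω').toReal)) ω ∂M.P s j := by
  have hle : stoppedSigma s τ hτ ≤ MeasurableSpace.pi := fun A hA => by
    simpa only [le_top, ofPred_true, inter_univ] using Fst_top_le_pi _ (hA ∞)
  have := M.prob s j
  have : SigmaFinite ((M.P s j).trim hle) := by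
    have := isFiniteMeasure_trim (μ := M.P s j) hle
    infer_instance
  rw [← integral_condExp hle]
  exact integral_congr_ae (M.strongMarkov s j hs τ hτ hτs G hGm hGb hGf)

theorem integral_valueAt_tauP_after_eq_applyAt [Finite E] (hg : ∀ j, Measurable fun t => g t j)
    (hgb : ∃ C, ∀ t j, |g t j| ≤ C) {s : ℝ} (hs : 0 ≤ s) (j : Option E)
    {σ : CPath E → ℝ≥0∞} (hσ : IsST s σ) (hσs : ∀ ω, ENNReal.ofReal s ≤ σ ω) (L : ℝ) :
    ∫ ω, {ω | σ ω ≠ ∞}.indicator (fun ω =>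
        valueAt g (tauP v (σ ω).toReal L (CPath.regularize ω)) (CPath.regularize ω)) ω ∂M.P s j
      = ∫ ω, applyAt M.P (fun a => tauP v a L) g (σ ω) (ω (σ ω).toReal) ∂M.P s j := by
  obtain ⟨C, hC⟩ := hgb
  let G : ℝ≥0∞ → CPath E → ℝ := fun t ω =>
    valueAt g (tauP v t.toReal L (CPath.regularize ω)) (CPath.regularize ω)
  have hGm : Measurable (Function.uncurry G) :=
    (measurable_valueAt_regularize hg).comp <| ((measurable_tauP_regularize v L).comp
      ((ENNReal.measurable_toReal.comp measurable_fst).prodMk measurable_snd)).prodMk measurable_snd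
  have hGf : ∀ (t : ℝ) (ω ω' : CPath E), (∀ u, t ≤ u → ω u = ω' u) →
      G (ENNReal.ofReal t) ω = G (ENNReal.ofReal t) ω' := fun t ω ω' h =>
    valueAt_tauP_congr fun u hu => CPath.regularize_congr_of_forall_ge h <|
      (le_max_left t 0).trans (ENNReal.toReal_ofReal'.symm.trans_le hu)
  rw [M.integral_strongMarkov hs j hσ hσs hGm ⟨C, fun _ _ => hC _ _⟩ hGf]
  refine integral_congr_ae (ae_of_all _ fun ω => ?_)
  by_cases hfin : σ ω = ∞
  · simp only [indicator, mem_ofPred_eq, hfin, ne_eq, not_true_eq_false, if_false, applyAt,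
      if_true]
  · rw [indicator_of_mem (show ω ∈ {ω | σ ω ≠ ∞} from hfin)]
    simp only [applyAt, if_neg hfin]
    exact M.integral_comp_regularize (F := fun ω => valueAt g (tauP v _ L ω) ω)
      ENNReal.toReal_nonneg (fun _ _ => valueAt_tauP_congr) _

theorem integral_valueAt_xiP_regularize_eq_opXiP {s ℓm ℓp : ℝ} (hs : 0 ≤ s) (j : Option E) :
    ∫ ω, valueAt g (xiP v ℓm ℓp s (CPath.regularize ω)) (CPath.regularize ω) ∂M.P s j
      = opXiP M.P v ℓm ℓp g s j :=
  M.integral_comp_regularize (F := fun ω => valueAt g (xiP v ℓm ℓp s ω) ω) hs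
    (fun _ _ h => by rw [xiP_congr h]; exact valueAt_congr le_toReal_xiP h) j

end MarkovFamily

end StrongMarkov

section Decomposition

variable {E : Type*} {v : Option E → ℝ} {g f : ℝ≥0∞ → Option E → ℝ} {t : ℝ≥0∞} {j : Option E}
  {s ℓm ℓp : ℝ} {ω : CPath E}

theorem restrP_of_pos (hv0 : v none = 0) (ht : t ≠ ∞) (hj : 0 < v j) : restrP v f t j = f t j := by
  cases j with
  | none => exact absurd hj (by simp [hv0])
  | some e => simp only [restrP, hj, ht, ne_eq, not_false_eq_true, and_self, if_true]

theorem restrM_of_neg (hv0 : v none = 0) (ht : t ≠ ∞) (hj : v j < 0) : restrM v f t j = f t j := by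
  cases j with
  | none => exact absurd hj (by simp [hv0])
  | some e => simp only [restrM, hj, ht, ne_eq, not_false_eq_true, and_self, if_true]

theorem restrP_top : restrP v f ∞ j = 0 := by
  cases j <;> simp [restrP]

theorem restrM_top : restrM v f ∞ j = 0 := by
  cases j <;> simp [restrM]

theorem valueAt_tauP_eq_xiP_add_xiM (hint : LocallyIntegrable fun u => v (ω u))
    (hω : CPath.IsRightLocConst s ω) (hs : 0 ≤ s) (hℓm : 0 ≤ ℓm) (hℓp : 0 ≤ ℓp)
    (hg0 : ∀ t, g t none = 0) :
    valueAt g (tauP v s ℓp ω) ω = valueAt g (xiP v ℓm ℓp s ω) ω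
      + if xiM v ℓm ℓp s ω ≠ ∞ then
          valueAt g (tauP v (xiM v ℓm ℓp s ω).toReal (ℓp + ℓm) ω) ω else 0 := by
  rcases lt_trichotomy (tauP v s ℓp ω) (tauM v s ℓm ω) with hlt | heq | hgt
  · simp only [xiP, xiM, if_pos hlt, if_neg hlt.not_gt, ne_eq, not_true_eq_false, if_false,
      add_zero]
  · have htop := tauP_eq_top_of_eq_tauM hint hω hs hℓm hℓp heq
    simp only [xiP, xiM, heq.symm, lt_irrefl, if_false, ne_eq, not_true_eq_false, add_zero, htop,
      valueAt_top]
  · simp only [xiP, xiM, if_neg hgt.not_gt, if_pos hgt, ne_eq, hgt.ne_top, not_false_eq_true,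
      if_true, valueAt_top, hg0, zero_add, ← tauP_eq_tauP_after_tauM hint hs hℓm hgt]

namespace MarkovFamily

variable [Finite E] (M : MarkovFamily E v) {L b : ℝ}

theorem integral_valueAt_tauP_eq_opP (hv0 : v none = 0) (hg : ∀ j, Measurable fun t => g t j)
    (hgb : ∃ C, ∀ t j, |g t j| ≤ C) (hg0 : ∀ t, g t none = 0) (hL : 0 ≤ L) (hb : 0 ≤ b)
    (j : Option E) :
    ∫ ω, valueAt g (tauP v b L ω) ω ∂M.P b j
      = ∫ ω, valueAt (opP M.P v L g) (tauP v b 0 ω) ω ∂M.P b j := by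
  let σ : CPath E → ℝ≥0∞ := fun ω => tauP v b 0 (CPath.regularize ω)
  have hrestart : ∀ ω, valueAt g (tauP v b L (CPath.regularize ω)) (CPath.regularize ω)
      = {ω | σ ω ≠ ∞}.indicator (fun ω =>
          valueAt g (tauP v (σ ω).toReal L (CPath.regularize ω)) (CPath.regularize ω)) ω := by
    intro ω
    by_cases hfin : σ ω = ∞
    · have htop : tauP v b L (CPath.regularize ω) = ∞ :=
        top_unique (hfin ▸ tauP_mono (ω := CPath.regularize ω) hL)
      rw [indicator_of_notMem (by simpa using hfin), htop, valueAt_top, hg0]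
    · rw [indicator_of_mem (show ω ∈ {ω | σ ω ≠ ∞} from hfin),
        ← tauP_eq_tauP_after_tauP_zero (locallyIntegrable_regularize v ω) hb hL hfin]
  have hpos : ∀ᵐ ω ∂M.P b j, applyAt M.P (fun a => tauP v a L) g (σ ω) (ω (σ ω).toReal)
      = valueAt (opP M.P v L g) (tauP v b 0 ω) ω := by
    filter_upwards [M.ae_isRightLocConst hb j] with ω hω
    have hσ : σ ω = tauP v b 0 ω := tauP_congr fun _ hu => hω.regularize_eq hu
    rw [← hσ]
    by_cases hfin : σ ω = ∞
    · simp only [hfin, applyAt, if_true, valueAt_top, opP, restrP_top]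
    have hρ : b ≤ (σ ω).toReal := le_toReal_tauP hfin
    have hv : 0 < v (ω (σ ω).toReal) := by
      rw [← hω.regularize_eq hρ]
      exact v_at_tauP_pos (locallyIntegrable_regularize v ω) hω.regularize hb le_rfl hfin
    rw [valueAt_of_ne_top hfin, opP, restrP_of_pos hv0 hfin hv]
  calc ∫ ω, valueAt g (tauP v b L ω) ω ∂M.P b j
      = ∫ ω, valueAt g (tauP v b L (CPath.regularize ω)) (CPath.regularize ω) ∂M.P b j :=
        (M.integral_comp_regularize hb (fun _ _ => valueAt_tauP_congr) j).symm
    _ = ∫ ω, applyAt M.P (fun a => tauP v a L) g (σ ω) (ω (σ ω).toReal) ∂M.P b j := by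
        simp only [hrestart]
        exact M.integral_valueAt_tauP_after_eq_applyAt hg hgb hb j (isST_tauP_regularize v 0)
          (fun _ => ofReal_le_tauP) L
    _ = _ := integral_congr_ae hpos

theorem applyAt_tauP_eq_opJP (hv0 : v none = 0) (hg : ∀ j, Measurable fun t => g t j)
    (hgb : ∃ C, ∀ t j, |g t j| ≤ C) (hg0 : ∀ t, g t none = 0) (hL : 0 ≤ L) {t : ℝ≥0∞}
    (ht : t ≠ ∞) {j : Option E} (hj : v j < 0) :
    applyAt M.P (fun a => tauP v a L) g t j = opJP M.P v (opP M.P v L g) t j := by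
  rw [opJP, restrM_of_neg hv0 ht hj]
  simp only [applyAt, if_neg ht]
  exact M.integral_valueAt_tauP_eq_opP hv0 hg hgb hg0 hL ENNReal.toReal_nonneg j

theorem integral_valueAt_tauP_regularize_eq_add (hg : ∀ j, Measurable fun t => g t j)
    (hgb : ∃ C, ∀ t j, |g t j| ≤ C) (hg0 : ∀ t, g t none = 0) (hs : 0 ≤ s) (hℓm : 0 ≤ ℓm)
    (hℓp : 0 ≤ ℓp) (j : Option E) :
    ∫ ω, valueAt g (tauP v s ℓp (CPath.regularize ω)) (CPath.regularize ω) ∂M.P s j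
      = ∫ ω, valueAt g (xiP v ℓm ℓp s (CPath.regularize ω)) (CPath.regularize ω) ∂M.P s j
        + ∫ ω, {ω | xiM v ℓm ℓp s (CPath.regularize ω) ≠ ∞}.indicator (fun ω =>
            valueAt g (tauP v (xiM v ℓm ℓp s (CPath.regularize ω)).toReal (ℓp + ℓm)
              (CPath.regularize ω)) (CPath.regularize ω)) ω ∂M.P s j := by
  have := M.prob s j
  have hafter : Integrable ({ω | xiM v ℓm ℓp s (CPath.regularize ω) ≠ ∞}.indicator fun ω =>
      valueAt g (tauP v (xiM v ℓm ℓp s (CPath.regularize ω)).toReal (ℓp + ℓm)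
        (CPath.regularize ω)) (CPath.regularize ω)) (M.P s j) :=
    (integrable_valueAt_regularize hg hgb ((measurable_tauP_regularize v (ℓp + ℓm)).comp
      ((ENNReal.measurable_toReal.comp (measurable_xiM_regularize v ℓm ℓp s)).prodMk
        measurable_id))).indicator
      (measurable_xiM_regularize v ℓm ℓp s (measurableSet_singleton ∞).compl)
  rw [← integral_add (integrable_valueAt_regularize hg hgb (measurable_xiP_regularize v ℓm ℓp s))
    hafter]
  refine integral_congr_ae ?_
  filter_upwards [M.ae_isRightLocConst hs j] with ω hω
  simpa only [indicator_apply, mem_ofPred_eq] using valueAt_tauP_eq_xiP_add_xiM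
    (locallyIntegrable_regularize v ω) hω.regularize hs hℓm hℓp hg0

theorem integral_valueAt_after_xiM_eq_opXiM (hv0 : v none = 0)
    (hg : ∀ j, Measurable fun t => g t j) (hgb : ∃ C, ∀ t j, |g t j| ≤ C)
    (hg0 : ∀ t, g t none = 0) (hs : 0 ≤ s) (hℓm : 0 ≤ ℓm) (hℓp : 0 ≤ ℓp) (j : Option E) :
    ∫ ω, {ω | xiM v ℓm ℓp s (CPath.regularize ω) ≠ ∞}.indicator (fun ω =>
        valueAt g (tauP v (xiM v ℓm ℓp s (CPath.regularize ω)).toReal (ℓp + ℓm)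
          (CPath.regularize ω)) (CPath.regularize ω)) ω ∂M.P s j
      = opXiM M.P v ℓm ℓp (opJP M.P v (opP M.P v (ℓp + ℓm) g)) s j := by
  rw [M.integral_valueAt_tauP_after_eq_applyAt hg hgb hs j (isST_xiM_regularize v ℓm ℓp)
    (fun _ => ofReal_le_xiM) (ℓp + ℓm)]
  refine integral_congr_ae ?_
  filter_upwards [M.ae_isRightLocConst hs j] with ω hω
  have hξ : xiM v ℓm ℓp s (CPath.regularize ω) = xiM v ℓm ℓp s ω :=
    xiM_congr fun _ hu => hω.regularize_eq hu
  change _ = valueAt _ _ ω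
  rw [hξ]
  by_cases hfin : xiM v ℓm ℓp s ω = ∞
  · simp only [hfin, applyAt, if_true, valueAt_top, restrM_top]
  have hneg := v_at_xiM_neg (locallyIntegrable_regularize v ω) hω.regularize hs hℓm (hξ ▸ hfin)
  rw [hξ, hω.regularize_eq (le_toReal_xiM hfin)] at hneg
  rw [valueAt_of_ne_top hfin]
  exact M.applyAt_tauP_eq_opJP hv0 hg hgb hg0 (add_nonneg hℓp hℓm) hfin hneg

end MarkovFamily

end Decomposition

theorem tau_plus_expectation_decomposition_general
    {E : Type*} [Fintype E] (v : Option E → ℝ)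
    (hv0 : v none = 0)
    (M : MarkovFamily E v)
    (g : ℝ≥0∞ → Option E → ℝ) (hg : MemBbP v g)
    (ℓm ℓp : ℝ) (hℓm : 0 ≤ ℓm) (hℓp : 0 ≤ ℓp) (s : ℝ) (hs : 0 ≤ s) (i : E) :
    ∫ ω, g (tauP v s ℓp ω) (Xat (tauP v s ℓp ω) ω) ∂ M.P s (some i)
      = opXiP M.P v ℓm ℓp g s (some i)
        + opXiM M.P v ℓm ℓp (opJP M.P v (opP M.P v (ℓp + ℓm) g)) s (some i) := by
  obtain ⟨hgm, hgb, hg0, -⟩ := hg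
  rw [← M.integral_valueAt_xiP_regularize_eq_opXiP hs,
    ← M.integral_valueAt_after_xiM_eq_opXiM hv0 hgm hgb hg0 hs hℓm hℓp,
    ← M.integral_valueAt_tauP_regularize_eq_add hgm hgb hg0 hs hℓm hℓp]
  exact (M.integral_comp_regularize hs (fun _ _ => valueAt_tauP_congr) _).symm

/-- (Decomposition (4.9).) For every `g⁺ ∈ B_b(X̄₊)` and `(s,i) ∈ ℝ₊ × E`:
`𝔼_{s,i}[g⁺(τ_{ℓ⁺}⁺(s), X_{τ_{ℓ⁺}⁺(s)})]
  = (Ξ⁺_{ℓ⁻,ℓ⁺} g⁺)(s,i) + (Ξ⁻_{ℓ⁻,ℓ⁺} J⁺ 𝒫⁺_{ℓ⁺+ℓ⁻} g⁺)(s,i)`. -/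
theorem tau_plus_expectation_decomposition
    {E : Type*} [Fintype E] (hcard : 1 < Fintype.card E) (v : Option E → ℝ)
    (hv : ∀ e : E, v (some e) ≠ 0) (hv0 : v none = 0)
    (hEp : ∃ e : E, 0 < v (some e)) (hEm : ∃ e : E, v (some e) < 0)
    (M : MarkovFamily E v)
    (g : ℝ≥0∞ → Option E → ℝ) (hg : MemBbP v g)
    (ℓm ℓp : ℝ) (hℓm : 0 ≤ ℓm) (hℓp : 0 ≤ ℓp) (s : ℝ) (hs : 0 ≤ s) (i : E) :
    ∫ ω, g (tauP v s ℓp ω) (Xat (tauP v s ℓp ω) ω) ∂ M.P s (some i)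
      = opXiP M.P v ℓm ℓp g s (some i)
        + opXiM M.P v ℓm ℓp (opJP M.P v (opP M.P v (ℓp + ℓm) g)) s (some i) :=
  tau_plus_expectation_decomposition_general v hv0 M g hg ℓm ℓp hℓm hℓp s hs i
end
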